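/- arXiv:2510.10088 — 8 statements merged into one kernel-verified Lean document; each statement's English description precedes it below -/
import Mathlib

section
/- Let r ≥ 2 be an integer and let x > 0. Then the one-sided limit lim_{t→(1−r)⁺} [ Θ(r,r,t,x) − ζ(r)(1 + x^{r−1})/(t−(1−r)) ] exists and equals x^{r−1} ζ(r)(γ − log x) + γ ζ(r) + x^{r−1} Σ_{k=1}^{r−2} binom(r−1,k) x^{−k} ζ(r−k) ζ(k+1), where the limit is over real t > 1−r. -/
open Real Filter Topology Finset

noncomputable def Theta (r s t x : ℝ) : ℝ :=
  ∑' n : ℕ+, ∑' m : ℕ+, 1 / ((n : ℝ) ^ r * (m : ℝ) ^ s * ((n : ℝ) + (m : ℝ) * x) ^ t)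

noncomputable def zetaR (s : ℝ) : ℝ := ∑' n : ℕ+, 1 / (n : ℝ) ^ s

/-!
Expanding `(n + m x) ^ (r - 1)` binomially gives, for `t = 1 - r + ε`,
`Θ(r, r, t, x) = ∑_{k < r} binom(r-1, k) x^(r-1-k) Θ(r - k, k + 1, ε, x)`.
As `ε → 0⁺` the terms with `0 < k < r - 1` tend to `ζ(r - k) ζ(k + 1)` by dominated convergence.
The term `Θ(1, r, ε, x)` differs from `ζ(1 + ε) ζ(r)` by a series whose terms
`n⁻¹ m⁻ʳ (n^(-ε) - (n + m x)^(-ε))` are dominated by `2 √x n^(-3/2) m^(1/2 - r)` and tend to `0`,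
and `ζ(1 + ε) = 1/ε + γ + o(1)`. The term `Θ(r, 1, ε, x) = x^(-ε) Θ(1, r, ε, 1/x)` reduces to the
previous one, the extra factor `x^(-ε) = 1 - ε log x + o(ε)` contributing `-ζ(r) log x`.
-/

lemma summable_one_div_pnat_rpow {s : ℝ} (hs : 1 < s) :
    Summable fun n : ℕ+ => 1 / (n : ℝ) ^ s :=
  summable_pnat_iff_summable_nat.mpr (Real.summable_one_div_nat_rpow.mpr hs)

lemma summable_one_div_rpow_mul_one_div_rpow {a b : ℝ} (ha : 1 < a) (hb : 1 < b) :
    Summable fun p : ℕ+ × ℕ+ => 1 / (p.1 : ℝ) ^ a * (1 / (p.2 : ℝ) ^ b) :=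
  (summable_one_div_pnat_rpow ha).mul_of_nonneg (summable_one_div_pnat_rpow hb)
    (fun _ => by positivity) (fun _ => by positivity)

lemma zetaR_mul_zetaR {a b : ℝ} (ha : 1 < a) (hb : 1 < b) :
    zetaR a * zetaR b = ∑' p : ℕ+ × ℕ+, 1 / (p.1 : ℝ) ^ a * (1 / (p.2 : ℝ) ^ b) :=
  (summable_one_div_pnat_rpow ha).tsum_mul_tsum (summable_one_div_pnat_rpow hb)
    (summable_one_div_rpow_mul_one_div_rpow ha hb)

lemma ofReal_zetaR {s : ℝ} (hs : 1 < s) : (zetaR s : ℂ) = riemannZeta s := by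
  rw [zeta_eq_tsum_one_div_nat_add_one_cpow (by simpa using hs), zetaR,
    tsum_pnat_eq_tsum_succ (f := fun n : ℕ => 1 / (n : ℝ) ^ s), Complex.ofReal_tsum]
  congr 1 with n
  rw [Complex.ofReal_div, Complex.ofReal_one, Complex.ofReal_cpow (by positivity)]
  push_cast
  rfl

lemma map_add_nhdsGT_zero (c : ℝ) : map (c + ·) (𝓝[>] 0) = 𝓝[>] c := by
  simp

lemma tendsto_zetaR_one_add_sub_inv :
    Tendsto (fun ε : ℝ => zetaR (1 + ε) - 1 / ε) (𝓝[>] 0) (𝓝 eulerMascheroniConstant) := by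
  have h := (Complex.continuous_re.tendsto _).comp
    (ZetaAsymptotics.tendsto_riemannZeta_sub_one_div_nhds_right.comp (map_add_nhdsGT_zero 1).le)
  refine h.congr' ?_
  filter_upwards [self_mem_nhdsWithin] with ε (hε : 0 < ε)
  simp only [Function.comp_apply]
  rw [← ofReal_zetaR (by linarith)]
  norm_cast
  simp

lemma log_one_add_le_two_mul_sqrt {y : ℝ} (hy : 0 ≤ y) : log (1 + y) ≤ 2 * √y := by
  have hsq : 1 + y ≤ (1 + √y) ^ 2 := by nlinarith [sq_sqrt hy, sqrt_nonneg y]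
  calc log (1 + y) ≤ log ((1 + √y) ^ 2) := log_le_log (by positivity) hsq
    _ = 2 * log (1 + √y) := by rw [log_pow]; norm_num
    _ ≤ 2 * √y := by
      have := log_le_sub_one_of_pos (by positivity : 0 < 1 + √y)
      linarith

lemma one_sub_rpow_neg_le {y ε : ℝ} (hy : 0 ≤ y) (hε1 : ε ≤ 1) :
    1 - (1 + y) ^ (-ε) ≤ 2 * √y := by
  have hlog : 0 ≤ log (1 + y) := log_nonneg (by linarith)
  have hexp : 1 - ε * log (1 + y) ≤ (1 + y) ^ (-ε) := by
    rw [rpow_def_of_pos (by linarith)]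
    linarith [add_one_le_exp (log (1 + y) * -ε)]
  nlinarith [log_one_add_le_two_mul_sqrt hy, mul_le_of_le_one_left hlog hε1]

lemma tendsto_const_rpow_neg_nhdsGT_zero {c : ℝ} (hc : 0 < c) :
    Tendsto (fun ε : ℝ => c ^ (-ε)) (𝓝[>] 0) (𝓝 1) := by
  have h : ContinuousAt (fun ε : ℝ => c ^ (-ε)) 0 :=
    (continuousAt_const_rpow hc.ne').comp continuousAt_neg
  simpa using h.tendsto.mono_left nhdsWithin_le_nhds

lemma tendsto_const_rpow_neg_sub_one_div {c : ℝ} (hc : 0 < c) :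
    Tendsto (fun ε : ℝ => (c ^ (-ε) - 1) / ε) (𝓝[>] 0) (𝓝 (-log c)) := by
  have hderiv : HasDerivAt (fun ε : ℝ => c ^ (-ε)) (-log c) 0 := by
    have := (hasStrictDerivAt_const_rpow hc (-0)).hasDerivAt.comp 0 (hasDerivAt_neg 0)
    simpa [Function.comp_def] using this
  refine (hasDerivAt_iff_tendsto_slope.mp hderiv).mono_left
    (nhdsWithin_mono _ fun ε (hε : 0 < ε) => hε.ne') |>.congr' ?_
  filter_upwards with ε
  simp [slope_def_field]

noncomputable def thetaTerm (r s t x : ℝ) (p : ℕ+ × ℕ+) : ℝ :=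
  1 / ((p.1 : ℝ) ^ r * (p.2 : ℝ) ^ s * ((p.1 : ℝ) + (p.2 : ℝ) * x) ^ t)

section thetaTerm

variable {r s t x : ℝ}

lemma thetaTerm_eq (hx : 0 ≤ x) (p : ℕ+ × ℕ+) :
    thetaTerm r s t x p =
      1 / (p.1 : ℝ) ^ r * (1 / (p.2 : ℝ) ^ s) * ((p.1 : ℝ) + (p.2 : ℝ) * x) ^ (-t) := by
  rw [thetaTerm, rpow_neg (by positivity)]
  field_simp

lemma thetaTerm_nonneg (hx : 0 ≤ x) (p : ℕ+ × ℕ+) : 0 ≤ thetaTerm r s t x p := by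
  rw [thetaTerm_eq hx]; positivity

lemma thetaTerm_swap (hx : 0 < x) (p : ℕ+ × ℕ+) :
    thetaTerm r s t x p = x ^ (-t) * thetaTerm s r t x⁻¹ p.swap := by
  have hsum : (p.1 : ℝ) + p.2 * x = x * (p.2 + p.1 * x⁻¹) := by field_simp; ring
  rw [thetaTerm_eq hx.le, thetaTerm_eq (inv_nonneg.mpr hx.le), Prod.fst_swap, Prod.snd_swap, hsum,
    mul_rpow hx.le (by positivity)]
  ring

lemma summable_thetaTerm (hx : 0 ≤ x) (hr : 1 < r + t) (hs : 1 < s) (ht : 0 ≤ t) :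
    Summable (thetaTerm r s t x) := by
  refine (summable_one_div_rpow_mul_one_div_rpow hr hs).of_nonneg_of_le (thetaTerm_nonneg hx)
    fun p => ?_
  have hn : (0 : ℝ) < p.1 := by positivity
  have hsplit : 1 / (p.1 : ℝ) ^ (r + t) * (1 / (p.2 : ℝ) ^ s) =
      1 / (p.1 : ℝ) ^ r * (1 / (p.2 : ℝ) ^ s) * (p.1 : ℝ) ^ (-t) := by
    rw [rpow_add hn, rpow_neg hn.le]; ring
  rw [thetaTerm_eq hx, hsplit]
  refine mul_le_mul_of_nonneg_left
    (rpow_le_rpow_of_nonpos hn (le_add_of_nonneg_right ?_) (neg_nonpos.mpr ht)) (by positivity)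
  positivity

lemma Summable.of_thetaTerm_swap (hx : 0 < x) (h : Summable (thetaTerm s r t x⁻¹)) :
    Summable (thetaTerm r s t x) :=
  ((h.comp_injective Prod.swap_injective).mul_left (x ^ (-t))).congr fun p =>
    (thetaTerm_swap hx p).symm

lemma Theta_eq_tsum (h : Summable (thetaTerm r s t x)) :
    Theta r s t x = ∑' p, thetaTerm r s t x p :=
  (h.tsum_prod' h.prod_factor).symm

lemma Theta_swap (hx : 0 < x) (h : Summable (thetaTerm s r t x⁻¹)) :
    Theta r s t x = x ^ (-t) * Theta s r t x⁻¹ := by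
  rw [Theta_eq_tsum (h.of_thetaTerm_swap hx), Theta_eq_tsum h, ← tsum_mul_left,
    ← (Equiv.prodComm ℕ+ ℕ+).tsum_eq]
  exact tsum_congr fun p => by rw [thetaTerm_swap hx]; rfl

end thetaTerm

lemma thetaTerm_one_sub_add {r : ℕ} (hr : 1 ≤ r) {x : ℝ} (hx : 0 ≤ x) (ε : ℝ)
    (p : ℕ+ × ℕ+) :
    thetaTerm r r (1 - r + ε) x p =
      ∑ k ∈ range r, ((r - 1).choose k : ℝ) * x ^ (r - 1 - k) *
        thetaTerm (r - k) (k + 1) ε x p := by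
  simp_rw [thetaTerm_eq hx]
  have hN : (0 : ℝ) < (p.1 : ℕ) := by positivity
  have hM : (0 : ℝ) < (p.2 : ℕ) := by positivity
  generalize ((p.1 : ℕ) : ℝ) = N at hN ⊢
  generalize ((p.2 : ℕ) : ℝ) = M at hM ⊢
  have hS : 0 < N + M * x := by positivity
  have hpow : (N + M * x) ^ (-(1 - r + ε)) = (N + M * x) ^ (r - 1) * (N + M * x) ^ (-ε) := by
    rw [show -(1 - (r : ℝ) + ε) = ((r - 1 : ℕ) : ℝ) + -ε by push_cast [Nat.cast_sub hr]; ring,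
      rpow_add hS, rpow_natCast]
  rw [hpow, add_pow, Nat.sub_add_cancel hr, sum_mul, mul_sum]
  refine sum_congr rfl fun k hk => ?_
  have hk : k < r := mem_range.mp hk
  rw [show (r : ℝ) - k = ((r - k : ℕ) : ℝ) by rw [Nat.cast_sub hk.le],
    show (k : ℝ) + 1 = ((k + 1 : ℕ) : ℝ) by push_cast; ring]
  simp only [rpow_natCast]
  have hNr : N ^ r = N ^ k * N ^ (r - k) := by rw [← pow_add]; congr 1; omega
  have hMr : M ^ r = M ^ (r - 1 - k) * M ^ (k + 1) := by rw [← pow_add]; congr 1; omega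
  rw [hNr, hMr, mul_pow]
  field_simp

lemma Theta_one_sub_add {r : ℕ} (hr : 2 ≤ r) {x : ℝ} (hx : 0 < x) {ε : ℝ} (hε : 0 < ε) :
    Theta r r (1 - r + ε) x =
      ∑ k ∈ range r, ((r - 1).choose k : ℝ) * x ^ (r - 1 - k) * Theta (r - k) (k + 1) ε x := by
  have hsummable : ∀ k ∈ range r, Summable (thetaTerm (r - k) (k + 1) ε x) := by
    intro k hk
    have hk : (k : ℝ) + 1 ≤ r := by exact_mod_cast mem_range.mp hk
    rcases k.eq_zero_or_pos with rfl | hk0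
    · have hr' : (1 : ℝ) < r := by exact_mod_cast hr
      exact (summable_thetaTerm (inv_nonneg.mpr hx.le) (by simpa using hε) (by simpa using hr')
        hε.le).of_thetaTerm_swap hx
    · have hk1 : (1 : ℝ) ≤ k := by exact_mod_cast hk0
      exact summable_thetaTerm hx.le (by linarith) (by linarith) hε.le
  have hterms := fun k hk => (hsummable k hk).mul_left (((r - 1).choose k : ℝ) * x ^ (r - 1 - k))
  have hexpand := funext (thetaTerm_one_sub_add (by omega : 1 ≤ r) hx.le ε)
  rw [Theta_eq_tsum (hexpand ▸ summable_sum hterms), hexpand, Summable.tsum_finsetSum hterms]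
  refine sum_congr rfl fun k hk => ?_
  rw [tsum_mul_left, Theta_eq_tsum (hsummable k hk)]

lemma tendsto_Theta_nhdsGT_zero {a b x : ℝ} (hx : 0 ≤ x) (ha : 1 < a) (hb : 1 < b) :
    Tendsto (fun ε => Theta a b ε x) (𝓝[>] 0) (𝓝 (zetaR a * zetaR b)) := by
  rw [zetaR_mul_zetaR ha hb]
  have hlim : Tendsto (fun ε => ∑' p, thetaTerm a b ε x p) (𝓝[>] 0)
      (𝓝 (∑' p : ℕ+ × ℕ+, 1 / (p.1 : ℝ) ^ a * (1 / (p.2 : ℝ) ^ b))) := by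
    refine tendsto_tsum_of_dominated_convergence (summable_one_div_rpow_mul_one_div_rpow ha hb)
      (fun p => ?_) ?_
    · simp_rw [thetaTerm_eq hx]
      simpa using (tendsto_const_rpow_neg_nhdsGT_zero (by positivity)).const_mul
        (1 / ((p.1 : ℕ) : ℝ) ^ a * (1 / ((p.2 : ℕ) : ℝ) ^ b))
    · filter_upwards [self_mem_nhdsWithin] with ε (hε : 0 < ε) p
      have hS : (1 : ℝ) ≤ (p.1 : ℕ) + (p.2 : ℕ) * x :=
        le_add_of_le_of_nonneg (by exact_mod_cast p.1.pos) (by positivity)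
      rw [norm_of_nonneg (thetaTerm_nonneg hx p), thetaTerm_eq hx]
      exact mul_le_of_le_one_right (by positivity)
        (rpow_le_one_of_one_le_of_nonpos hS (by linarith))
  refine hlim.congr' ?_
  filter_upwards [self_mem_nhdsWithin] with ε (hε : 0 < ε)
  rw [Theta_eq_tsum (summable_thetaTerm hx (by linarith) hb hε.le)]

/- A bound linear in `m x / n` would leave the series `∑ m^(1-b)`, divergent for `b = 2`;
the square root keeps it summable. -/
lemma abs_thetaTerm_one_sub_le {b ε x : ℝ} (hx : 0 ≤ x) (hε : 0 ≤ ε) (hε1 : ε ≤ 1)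
    (p : ℕ+ × ℕ+) :
    |thetaTerm 1 b ε x p - 1 / (p.1 : ℝ) ^ (1 + ε) * (1 / (p.2 : ℝ) ^ b)| ≤
      2 * √x * (1 / (p.1 : ℝ) ^ (3 / 2 : ℝ) * (1 / (p.2 : ℝ) ^ (b - 1 / 2))) := by
  rw [thetaTerm_eq hx]
  have hN1 : (1 : ℝ) ≤ (p.1 : ℕ) := by exact_mod_cast p.1.pos
  have hM : (0 : ℝ) < (p.2 : ℕ) := by positivity
  generalize ((p.1 : ℕ) : ℝ) = N at hN1 ⊢
  have hN : 0 < N := by linarith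
  generalize ((p.2 : ℕ) : ℝ) = M at hM ⊢
  set y := M * x / N with hy
  have hy0 : 0 ≤ y := by positivity
  have hS : N + M * x = N * (1 + y) := by rw [hy]; field_simp
  have hdiff : 1 / N ^ (1 : ℝ) * (1 / M ^ b) * (N + M * x) ^ (-ε) - 1 / N ^ (1 + ε) * (1 / M ^ b)
      = -(1 / N * (1 / M ^ b) * N ^ (-ε) * (1 - (1 + y) ^ (-ε))) := by
    rw [hS, mul_rpow hN.le (by positivity), rpow_add hN, rpow_neg hN.le, rpow_one]
    ring
  have hle1 : (1 + y) ^ (-ε) ≤ 1 := rpow_le_one_of_one_le_of_nonpos (by linarith) (by linarith)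
  have hNε : N ^ (-ε) ≤ 1 := rpow_le_one_of_one_le_of_nonpos hN1 (by linarith)
  rw [hdiff, abs_neg, abs_of_nonneg (by have := sub_nonneg.mpr hle1; positivity)]
  calc 1 / N * (1 / M ^ b) * N ^ (-ε) * (1 - (1 + y) ^ (-ε))
      ≤ 1 / N * (1 / M ^ b) * 1 * (2 * √y) := by
        gcongr
        exact one_sub_rpow_neg_le hy0 hε1
    _ = 2 * √x * (1 / N ^ (3 / 2 : ℝ) * (1 / M ^ (b - 1 / 2))) := by
        rw [hy, sqrt_div' _ hN.le, sqrt_mul hM.le]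
        simp only [sqrt_eq_rpow]
        rw [show (3 / 2 : ℝ) = 1 + 1 / 2 by norm_num, rpow_add hN, rpow_one, rpow_sub hM]
        field_simp

lemma tendsto_Theta_one_sub_zetaR_mul_zetaR {b x : ℝ} (hx : 0 ≤ x) (hb : 3 / 2 < b) :
    Tendsto (fun ε => Theta 1 b ε x - zetaR (1 + ε) * zetaR b) (𝓝[>] 0) (𝓝 0) := by
  set g : ℝ → ℕ+ × ℕ+ → ℝ := fun ε p => 1 / (p.1 : ℝ) ^ (1 + ε) * (1 / (p.2 : ℝ) ^ b)
  have hlim : Tendsto (fun ε => ∑' p, (thetaTerm 1 b ε x p - g ε p)) (𝓝[>] 0)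
      (𝓝 (∑' _ : ℕ+ × ℕ+, (0 : ℝ))) := by
    refine tendsto_tsum_of_dominated_convergence
      ((summable_one_div_rpow_mul_one_div_rpow (a := 3 / 2) (b := b - 1 / 2) (by norm_num)
        (by linarith)).mul_left (2 * √x))
      (fun p => ?_) ?_
    · have hcont : ContinuousAt (fun ε => thetaTerm 1 b ε x p - g ε p) 0 := by
        have hN : (0 : ℝ) < (p.1 : ℕ) := by positivity
        have hS : (0 : ℝ) < (p.1 : ℕ) + (p.2 : ℕ) * x := by positivity
        simp only [g, thetaTerm]
        fun_prop (disch := positivity)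
      convert hcont.tendsto.mono_left nhdsWithin_le_nhds using 2
      simp [g, thetaTerm, mul_comm]
    · filter_upwards [Ioo_mem_nhdsGT one_pos] with ε hε p
      exact abs_thetaTerm_one_sub_le hx hε.1.le hε.2.le p
  rw [tsum_zero] at hlim
  refine hlim.congr' ?_
  filter_upwards [self_mem_nhdsWithin] with ε (hε : 0 < ε)
  have hθ : Summable (thetaTerm 1 b ε x) := summable_thetaTerm hx (by linarith) (by linarith) hε.le
  have hg := summable_one_div_rpow_mul_one_div_rpow (by linarith : 1 < 1 + ε) (by linarith : 1 < b)
  rw [hθ.tsum_sub hg, Theta_eq_tsum hθ, zetaR_mul_zetaR (by linarith) (by linarith)]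

lemma tendsto_Theta_one_left {b x : ℝ} (hx : 0 ≤ x) (hb : 3 / 2 < b) :
    Tendsto (fun ε => Theta 1 b ε x - zetaR b / ε) (𝓝[>] 0)
      (𝓝 (eulerMascheroniConstant * zetaR b)) := by
  have h := (tendsto_Theta_one_sub_zetaR_mul_zetaR hx hb).add
    (tendsto_zetaR_one_add_sub_inv.mul_const (zetaR b))
  rw [zero_add] at h
  refine h.congr fun ε => ?_
  ring

lemma tendsto_Theta_one_right {b x : ℝ} (hx : 0 < x) (hb : 3 / 2 < b) :
    Tendsto (fun ε => Theta b 1 ε x - zetaR b / ε) (𝓝[>] 0)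
      (𝓝 (zetaR b * (eulerMascheroniConstant - log x))) := by
  have h := ((tendsto_const_rpow_neg_nhdsGT_zero hx).mul
    (tendsto_Theta_one_left (inv_nonneg.mpr hx.le) hb)).add
    ((tendsto_const_rpow_neg_sub_one_div hx).const_mul (zetaR b))
  convert h.congr' ?_ using 2
  · ring
  filter_upwards [self_mem_nhdsWithin] with ε (hε : 0 < ε)
  rw [Theta_swap hx (summable_thetaTerm (inv_nonneg.mpr hx.le) (by linarith) (by linarith) hε.le)]
  field_simp
  ring

lemma sum_range_eq_add_sum_Icc_add {M : Type*} [AddCommMonoid M] (f : ℕ → M) {r : ℕ}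
    (hr : 2 ≤ r) :
    ∑ k ∈ range r, f k = f 0 + ∑ k ∈ Icc 1 (r - 2), f k + f (r - 1) := by
  obtain ⟨n, rfl⟩ := Nat.exists_eq_add_of_le' hr
  rw [sum_range_succ, sum_range_succ', range_eq_Ico, sum_Ico_add', zero_add,
    Ico_add_one_right_eq_Icc, Nat.add_sub_cancel, add_comm _ (f 0)]
  rfl

lemma Theta_one_sub_add_sub_div {r : ℕ} (hr : 2 ≤ r) {x : ℝ} (hx : 0 < x) {ε : ℝ} (hε : 0 < ε) :
    Theta r r (1 - r + ε) x - zetaR r * (1 + x ^ (r - 1)) / ε =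
      x ^ (r - 1) * (Theta r 1 ε x - zetaR r / ε) +
        ∑ k ∈ Icc 1 (r - 2), ((r - 1).choose k : ℝ) * x ^ (r - 1 - k) * Theta (r - k) (k + 1) ε x +
        (Theta 1 r ε x - zetaR r / ε) := by
  rw [Theta_one_sub_add hr hx hε, sum_range_eq_add_sum_Icc_add _ hr]
  have hcast : ((r - 1 : ℕ) : ℝ) = r - 1 := by rw [Nat.cast_sub (by omega), Nat.cast_one]
  simp only [Nat.choose_zero_right, Nat.choose_self, Nat.sub_zero, Nat.sub_self, Nat.cast_zero,
    Nat.cast_one, pow_zero, sub_zero, zero_add, one_mul, hcast, sub_sub_cancel, sub_add_cancel]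
  ring

lemma tendsto_sum_Icc_Theta (r : ℕ) {x : ℝ} (hx : 0 ≤ x) :
    Tendsto (fun ε => ∑ k ∈ Icc 1 (r - 2),
      ((r - 1).choose k : ℝ) * x ^ (r - 1 - k) * Theta (r - k) (k + 1) ε x) (𝓝[>] 0)
      (𝓝 (∑ k ∈ Icc 1 (r - 2),
        ((r - 1).choose k : ℝ) * x ^ (r - 1 - k) * (zetaR (r - k) * zetaR (k + 1)))) := by
  refine tendsto_finsetSum _ fun k hk => (tendsto_Theta_nhdsGT_zero hx ?_ ?_).const_mul _
  · have : (k : ℝ) + 2 ≤ r := by exact_mod_cast (by grind : k + 2 ≤ r)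
    linarith
  · have : (1 : ℝ) ≤ k := by exact_mod_cast (mem_Icc.mp hk).1
    linarith

theorem stmt0 (r : ℕ) (hr : 2 ≤ r) (x : ℝ) (hx : 0 < x) :
    Tendsto
      (fun t : ℝ => Theta r r t x - zetaR r * (1 + x ^ (r - 1)) / (t - (1 - (r : ℝ))))
      (𝓝[>] (1 - (r : ℝ)))
      (𝓝 (x ^ (r - 1) * zetaR r * (Real.eulerMascheroniConstant - Real.log x)
          + Real.eulerMascheroniConstant * zetaR r
          + x ^ (r - 1) * ∑ k ∈ Finset.Icc 1 (r - 2),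
              ((r - 1).choose k : ℝ) * (x ^ k)⁻¹ * zetaR (r - k) * zetaR (k + 1))) := by
  have hr' : (3 / 2 : ℝ) < r := by
    have : (2 : ℝ) ≤ r := by exact_mod_cast hr
    linarith
  have h := (((tendsto_Theta_one_right hx hr').const_mul (x ^ (r - 1))).add
    (tendsto_sum_Icc_Theta r hx.le)).add (tendsto_Theta_one_left hx.le hr')
  rw [← map_add_nhdsGT_zero, tendsto_map'_iff]
  convert h.congr' ?_ using 2
  · have hterm : ∀ k ∈ Icc 1 (r - 2), x ^ (r - 1) *
        (((r - 1).choose k : ℝ) * (x ^ k)⁻¹ * zetaR (r - k) * zetaR (k + 1)) =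
        ((r - 1).choose k : ℝ) * x ^ (r - 1 - k) * (zetaR (r - k) * zetaR (k + 1)) := by
      intro k hk
      rw [pow_sub₀ x hx.ne' (show k ≤ r - 1 by grind)]
      ring
    rw [mul_sum, sum_congr rfl hterm]
    ring
  · filter_upwards [self_mem_nhdsWithin] with ε (hε : 0 < ε)
    rw [Function.comp_apply, add_sub_cancel_left, Theta_one_sub_add_sub_div hr hx hε]
end

section
/- Let r, s, t be real numbers with r+s+t > 2, r+t > 1 and s+t > 1, let x > 0, and let n be a natural number. Then Θ(r,s,t,x) = Σ_{ℓ=0}^{n} binom(n,ℓ) x^ℓ Θ(r−n+ℓ, s−ℓ, t+n, x), where every term Θ(r−n+ℓ, s−ℓ, t+n, x) on the right-hand side is given by an absolutely convergent double series. -/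
open Real Filter Topology Finset

/-!
Termwise, the identity is the binomial expansion of `(n + m x)^N` divided by
`n^r m^s (n + m x)^(t + N)`; absolute convergence of every series involved lets it be summed.

For convergence, `min 1 x * max n m ≤ n + m x ≤ (1 + x) * max n m`, so the summand is
`O(n^(-r) m^(-s) max(n, m)^(-t))`. On `n ≤ m` this is at most `n^(-r-δ) m^(-s-t+δ)` for every
`δ ≥ 0`, and the three hypotheses leave room for a `δ` making both exponents less than `-1`;
symmetrically on `m ≤ n`.
-/

lemma summable_pnat_rpow {a : ℝ} (ha : a < -1) : Summable (fun n : ℕ+ => (n : ℝ) ^ a) :=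
  (Real.summable_nat_rpow.mpr ha).comp_injective PNat.coe_injective

lemma rpow_le_rpow_add_rpow_of_mem_Icc {a b c : ℝ} (ha : 0 < a) (hc : c ∈ Set.Icc a b) (y : ℝ) :
    c ^ y ≤ a ^ y + b ^ y := by
  have hc0 : 0 < c := ha.trans_le hc.1
  have hb : 0 < b := hc0.trans_le hc.2
  rcases le_total 0 y with hy | hy
  · exact (rpow_le_rpow hc0.le hc.2 hy).trans (le_add_of_nonneg_left (by positivity))
  · exact (rpow_le_rpow_of_nonpos ha hc.1 hy).trans (le_add_of_nonneg_right (by positivity))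

lemma rpow_mul_rpow_le_rpow_sub_mul_rpow_add {u v δ : ℝ} (hu : 0 < u) (huv : u ≤ v) (hδ : 0 ≤ δ)
    (a b : ℝ) : u ^ a * v ^ b ≤ u ^ (a - δ) * v ^ (b + δ) := by
  have hv : 0 < v := hu.trans_le huv
  rw [rpow_sub hu, rpow_add hv, div_mul_eq_mul_div, le_div_iff₀ (by positivity), mul_assoc]
  gcongr

lemma exists_rpow_mul_rpow_le {r q : ℝ} (h : 2 < r + q) (hq : 1 < q) :
    ∃ a b : ℝ, a < -1 ∧ b < -1 ∧
      ∀ u v : ℝ, 0 < u → u ≤ v → u ^ (-r) * v ^ (-q) ≤ u ^ a * v ^ b := by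
  obtain ⟨δ, hδ, hδq⟩ := exists_between (max_lt (by linarith) (by linarith) : max 0 (1 - r) < q - 1)
  refine ⟨-r - δ, -q + δ, by linarith [le_max_right 0 (1 - r)], by linarith,
    fun u v hu huv => rpow_mul_rpow_le_rpow_sub_mul_rpow_add hu huv (le_of_max_le_left hδ.le) _ _⟩

lemma summable_rpow_mul_rpow_mul_max_rpow {r s t : ℝ} (h1 : 2 < r + s + t) (h2 : 1 < r + t)
    (h3 : 1 < s + t) :
    Summable fun p : ℕ+ × ℕ+ => (p.1 : ℝ) ^ (-r) * (p.2 : ℝ) ^ (-s) * max (p.1 : ℝ) p.2 ^ (-t) := by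
  obtain ⟨a, b, ha, hb, hle⟩ := exists_rpow_mul_rpow_le (by linarith : 2 < r + (s + t)) h3
  obtain ⟨a', b', ha', hb', hle'⟩ := exists_rpow_mul_rpow_le (by linarith : 2 < s + (r + t)) h2
  have hprod {c d : ℝ} (hc : c < -1) (hd : d < -1) :
      Summable fun p : ℕ+ × ℕ+ => (p.1 : ℝ) ^ c * (p.2 : ℝ) ^ d :=
    (summable_pnat_rpow hc).mul_of_nonneg (summable_pnat_rpow hd) (fun _ => by positivity)
      (fun _ => by positivity)
  refine Summable.of_nonneg_of_le (fun _ => by positivity) (fun p => ?_)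
    ((hprod ha hb).add (hprod hb' ha'))
  have hm (k : ℕ+) : 0 < (k : ℝ) := by positivity
  rcases le_total (p.1 : ℝ) p.2 with h | h
  · calc (p.1 : ℝ) ^ (-r) * (p.2 : ℝ) ^ (-s) * max (p.1 : ℝ) p.2 ^ (-t)
        = (p.1 : ℝ) ^ (-r) * (p.2 : ℝ) ^ (-(s + t)) := by
          rw [max_eq_right h, mul_assoc, ← rpow_add (hm _), neg_add]
      _ ≤ _ := (hle _ _ (hm _) h).trans (le_add_of_nonneg_right (by positivity))
  · calc (p.1 : ℝ) ^ (-r) * (p.2 : ℝ) ^ (-s) * max (p.1 : ℝ) p.2 ^ (-t)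
        = (p.2 : ℝ) ^ (-s) * (p.1 : ℝ) ^ (-(r + t)) := by
          rw [max_eq_left h, mul_comm ((p.1 : ℝ) ^ (-r)), mul_assoc, ← rpow_add (hm _), neg_add]
      _ ≤ (p.2 : ℝ) ^ a' * (p.1 : ℝ) ^ b' := hle' _ _ (hm _) h
      _ ≤ _ := by rw [mul_comm]; exact le_add_of_nonneg_left (by positivity)

lemma one_div_rpow_mul_rpow_mul_rpow_eq_sum_choose {a b x : ℝ} (ha : 0 < a) (hb : 0 < b)
    (hc : 0 < a + b * x) (r s t : ℝ) (n : ℕ) :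
    1 / (a ^ r * b ^ s * (a + b * x) ^ t) =
      ∑ ℓ ∈ range (n + 1), (n.choose ℓ : ℝ) * x ^ ℓ *
        (1 / (a ^ (r - n + ℓ) * b ^ (s - ℓ) * (a + b * x) ^ (t + n))) := by
  -- the right-hand side is shaped as the `ℓ`-th term of `add_pow` for `(b * x / a + 1) ^ n`
  have hterm (ℓ : ℕ) : (n.choose ℓ : ℝ) * x ^ ℓ *
      (1 / (a ^ (r - n + ℓ) * b ^ (s - ℓ) * (a + b * x) ^ (t + n))) =
        1 / (a ^ r * b ^ s * (a + b * x) ^ t) * (a / (a + b * x)) ^ n *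
          ((b * x / a) ^ ℓ * 1 ^ (n - ℓ) * n.choose ℓ) := by
    simp only [rpow_add ha, rpow_sub ha, rpow_sub hb, rpow_add hc, rpow_natCast, one_pow, mul_one,
      div_pow]
    field_simp
    ring
  rw [sum_congr rfl fun ℓ _ => hterm ℓ, ← mul_sum, ← add_pow, div_add_one ha.ne',
    add_comm (b * x)]
  field_simp
  rw [← mul_pow, div_mul_div_cancel₀ hc.ne', div_self ha.ne', one_pow]

namespace Theta

noncomputable def term (r s t x : ℝ) (p : ℕ+ × ℕ+) : ℝ :=
  1 / ((p.1 : ℝ) ^ r * (p.2 : ℝ) ^ s * ((p.1 : ℝ) + (p.2 : ℝ) * x) ^ t)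

theorem eq_tsum_term {r s t x : ℝ} (h : Summable (term r s t x)) :
    Theta r s t x = ∑' p, term r s t x p :=
  h.tsum_prod.symm

theorem summable_term {r s t x : ℝ} (h1 : 2 < r + s + t) (h2 : 1 < r + t) (h3 : 1 < s + t)
    (hx : 0 < x) : Summable (term r s t x) := by
  set k := min 1 x
  have hk : 0 < k := lt_min one_pos hx
  refine Summable.of_nonneg_of_le (fun p => by unfold term; positivity) (fun p => ?_)
    ((summable_rpow_mul_rpow_mul_max_rpow h1 h2 h3).mul_left (k ^ (-t) + (1 + x) ^ (-t)))
  have ha : (0 : ℝ) < p.1 := by positivity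
  have hb : (0 : ℝ) < p.2 := by positivity
  set M := max (p.1 : ℝ) p.2
  set c := (p.1 : ℝ) + p.2 * x
  have hM : 0 < M := lt_max_of_lt_left ha
  have hlow : k * M ≤ c := by
    rw [mul_max_of_nonneg _ _ hk.le]
    refine max_le ?_ ?_
    · nlinarith [min_le_left 1 x]
    · nlinarith [min_le_right 1 x]
  have hhigh : c ≤ (1 + x) * M := by
    nlinarith [le_max_left (p.1 : ℝ) p.2, le_max_right (p.1 : ℝ) p.2]
  have hc : c ^ (-t) ≤ (k ^ (-t) + (1 + x) ^ (-t)) * M ^ (-t) := by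
    rw [add_mul, ← mul_rpow hk.le hM.le, ← mul_rpow (by positivity) hM.le]
    exact rpow_le_rpow_add_rpow_of_mem_Icc (by positivity) ⟨hlow, hhigh⟩ _
  calc term r s t x p = (p.1 : ℝ) ^ (-r) * (p.2 : ℝ) ^ (-s) * c ^ (-t) := by
        simp only [term, one_div, mul_inv, rpow_neg (Nat.cast_nonneg _),
          rpow_neg (by positivity : (0 : ℝ) ≤ c)]
        rfl
    _ ≤ (p.1 : ℝ) ^ (-r) * (p.2 : ℝ) ^ (-s) * ((k ^ (-t) + (1 + x) ^ (-t)) * M ^ (-t)) := by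
        gcongr
    _ = _ := by ring

theorem term_eq_sum_choose (r s t : ℝ) {x : ℝ} (hx : 0 ≤ x) (n : ℕ) (p : ℕ+ × ℕ+) :
    term r s t x p =
      ∑ ℓ ∈ range (n + 1), (n.choose ℓ : ℝ) * x ^ ℓ * term (r - n + ℓ) (s - ℓ) (t + n) x p :=
  one_div_rpow_mul_rpow_mul_rpow_eq_sum_choose (by positivity) (by positivity) (by positivity)
    _ _ _ _

end Theta

theorem stmt3 (r s t : ℝ) (h1 : 2 < r + s + t) (h2 : 1 < r + t) (h3 : 1 < s + t)
    (x : ℝ) (hx : 0 < x) (n : ℕ) :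
    Theta r s t x =
      ∑ ℓ ∈ Finset.range (n + 1),
        (n.choose ℓ : ℝ) * x ^ ℓ * Theta (r - n + ℓ) (s - ℓ) (t + n) x
    ∧ ∀ ℓ ∈ Finset.range (n + 1),
        Summable (fun p : ℕ+ × ℕ+ =>
          1 / ((p.1 : ℝ) ^ (r - n + ℓ) * (p.2 : ℝ) ^ (s - (ℓ : ℝ)) *
            ((p.1 : ℝ) + (p.2 : ℝ) * x) ^ (t + n))) := by
  have hsummable : ∀ ℓ ∈ range (n + 1), Summable (Theta.term (r - n + ℓ) (s - ℓ) (t + n) x) := by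
    intro ℓ hℓ
    have hℓn : (ℓ : ℝ) ≤ n := by exact_mod_cast Nat.lt_succ_iff.mp (mem_range.mp hℓ)
    have hℓ : (0 : ℝ) ≤ ℓ := ℓ.cast_nonneg
    exact Theta.summable_term (by linarith) (by linarith) (by linarith) hx
  refine ⟨?_, hsummable⟩
  rw [Theta.eq_tsum_term (Theta.summable_term h1 h2 h3 hx),
    tsum_congr (Theta.term_eq_sum_choose r s t hx.le n),
    Summable.tsum_finsetSum fun ℓ hℓ => (hsummable ℓ hℓ).mul_left _]
  refine sum_congr rfl fun ℓ hℓ => ?_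
  rw [tsum_mul_left, Theta.eq_tsum_term (hsummable ℓ hℓ)]
end

section
/- Let z be an integer with z > 2 and let x > 0. Then x^{z/2} Σ_{j=1}^∞ ψ^{(z−1)}(1 + jx) = x^{−z/2} Σ_{j=1}^∞ ψ^{(z−1)}(1 + j/x), where ψ^{(z−1)} denotes the (z−1)-th derivative of the digamma function; both series converge absolutely. -/
/-!
Termwise differentiation of `ψ(y) = ψ(1) + ∑_{n ≥ 0} (1/(n+1) - 1/(n+y))` gives
`ψ^{(k-1)}(y) = (-1)^k (k-1)! ζ(k, y)`, so `∑_j ψ^{(k-1)}(1 + j x)` is, up to this constant,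
the double series `L_k(x) = ∑_{j, m ≥ 1} (m + j x)^{-k}`, absolutely convergent for `k ≥ 3`.
Exchanging `j` and `m` gives `L_k(1/x) = x^k L_k(x)`, which is the modular relation.
The series for `ψ` itself comes from `ψ(y + N) = ψ(y) + ∑_{n < N} 1/(n+y)` and
`ψ(y + N) = log N + o(1)`; the latter holds because log-convexity of `Γ` squeezes `ψ(t + 1)`
between `log t` and `log (t + 1)`.
-/

open Real Filter Topology Finset

noncomputable def psi (y : ℝ) : ℝ := deriv Real.Gamma y / Real.Gamma y

lemma differentiableAt_log_Gamma {y : ℝ} (hy : 0 < y) :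
    DifferentiableAt ℝ (log ∘ Gamma) y :=
  (differentiableAt_Gamma fun m => by linarith [(m.cast_nonneg : (0 : ℝ) ≤ m)]).log
    (Gamma_pos_of_pos hy).ne'

lemma deriv_log_Gamma {y : ℝ} (hy : 0 < y) : deriv (log ∘ Gamma) y = psi y :=
  deriv.log (differentiableAt_Gamma fun m => by linarith [(m.cast_nonneg : (0 : ℝ) ≤ m)])
    (Gamma_pos_of_pos hy).ne'

lemma log_Gamma_add_one {y : ℝ} (hy : 0 < y) :
    (log ∘ Gamma) (y + 1) = (log ∘ Gamma) y + log y := by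
  simp only [Function.comp_apply, Gamma_add_one hy.ne',
    log_mul hy.ne' (Gamma_pos_of_pos hy).ne', add_comm]

lemma psi_add_one {y : ℝ} (hy : 0 < y) : psi (y + 1) = psi y + y⁻¹ := by
  rw [← deriv_log_Gamma (by linarith), ← deriv_log_Gamma hy, ← deriv_comp_add_const,
    ← deriv_log, ← deriv_add (differentiableAt_log_Gamma hy) (differentiableAt_log hy.ne')]
  apply EventuallyEq.deriv_eq
  filter_upwards [eventually_gt_nhds hy] with w hw using log_Gamma_add_one hw

lemma psi_add_nat {y : ℝ} (hy : 0 < y) (N : ℕ) :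
    psi (y + N) = psi y + ∑ n ∈ range N, ((n : ℝ) + y)⁻¹ := by
  induction N with
  | zero => simp
  | succ N ih =>
    rw [Nat.cast_succ, ← add_assoc, psi_add_one (by positivity), ih, sum_range_succ, add_comm y]
    ring

lemma log_le_psi_add_one {t : ℝ} (ht : 0 < t) : log t ≤ psi (t + 1) := by
  rw [← deriv_log_Gamma (by linarith)]
  refine le_of_eq_of_le ?_ (convexOn_log_Gamma.slope_le_deriv ht (by simp; linarith)
    (by linarith) (differentiableAt_log_Gamma (by linarith)))
  rw [slope_def_field, add_sub_cancel_left, div_one, log_Gamma_add_one ht, add_sub_cancel_left]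

lemma psi_add_one_le_log {t : ℝ} (ht : 0 < t) : psi (t + 1) ≤ log (t + 1) := by
  have ht' : (0 : ℝ) < t + 1 := by linarith
  rw [← deriv_log_Gamma ht']
  refine (convexOn_log_Gamma.deriv_le_slope ht' (by simp; linarith) (lt_add_one _)
    (differentiableAt_log_Gamma ht')).trans_eq ?_
  rw [slope_def_field, add_sub_cancel_left, div_one, log_Gamma_add_one ht',
    add_sub_cancel_left]

lemma tendsto_psi_add_nat_sub_log {y : ℝ} (hy : 0 < y) :
    Tendsto (fun N : ℕ => psi (y + N) - log N) atTop (𝓝 0) := by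
  have hlog (c : ℝ) : Tendsto (fun N : ℕ => log (N + c) - log N) atTop (𝓝 0) :=
    (tendsto_log_comp_add_sub_log c).comp tendsto_natCast_atTop_atTop
  refine tendsto_of_tendsto_of_tendsto_of_le_of_le' (hlog (y - 1)) (hlog y) ?_ ?_ <;>
    filter_upwards [eventually_ge_atTop 1] with N hN <;>
    have hN' : (1 : ℝ) ≤ N := by exact_mod_cast hN
  · have := log_le_psi_add_one (t := N + (y - 1)) (by linarith)
    rw [show (N : ℝ) + (y - 1) + 1 = y + N by ring] at this
    linarith
  · have := psi_add_one_le_log (t := N + (y - 1)) (by linarith)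
    rw [show (N : ℝ) + (y - 1) + 1 = y + N by ring] at this
    rw [add_comm (N : ℝ)]
    linarith

-- The Hurwitz zeta function `ζ(k, y)`; the `tsum` is junk (`0`) for `k ≤ 1`.
noncomputable def hurwitzZetaNat (k : ℕ) (y : ℝ) : ℝ :=
  ∑' n : ℕ, (((n : ℝ) + y) ^ k)⁻¹

lemma summable_inv_add_pow {k : ℕ} (hk : 2 ≤ k) (y : ℝ) :
    Summable fun n : ℕ => (((n : ℝ) + y) ^ k)⁻¹ := by
  refine Summable.of_norm (((summable_one_div_nat_add_rpow y k).mpr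
    (by exact_mod_cast hk)).congr fun n => ?_)
  rw [norm_inv, norm_pow, norm_eq_abs, rpow_natCast, one_div]

lemma hasDerivAt_inv_add_pow (k : ℕ) {a w : ℝ} (hw : a + w ≠ 0) :
    HasDerivAt (fun w : ℝ => ((a + w) ^ k)⁻¹) (-(k * ((a + w) ^ (k + 1))⁻¹)) w := by
  have := (hasDerivAt_zpow (-k : ℤ) (a + w) (.inl hw)).comp_const_add a w
  simp only [zpow_neg, zpow_natCast, Int.cast_neg, Int.cast_natCast] at this
  rwa [neg_mul, show (-(k : ℤ) - 1) = -((k + 1 : ℕ) : ℤ) by push_cast; ring, zpow_neg,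
    zpow_natCast] at this

lemma summable_inv_add_one_sub_inv_add {y : ℝ} (hy : 0 < y) :
    Summable fun n : ℕ => ((n : ℝ) + 1)⁻¹ - ((n : ℝ) + y)⁻¹ := by
  set c := min 1 y
  refine Summable.of_norm_bounded ((summable_inv_add_pow le_rfl c).mul_left |y - 1|) fun n => ?_
  have hc : 0 < c := lt_min one_pos hy
  have hn : (0 : ℝ) ≤ n := n.cast_nonneg
  have hprod : ((n : ℝ) + c) ^ 2 ≤ ((n : ℝ) + 1) * (n + y) := by
    rw [sq]; gcongr <;> simp [c]
  rw [inv_sub_inv (by positivity) (by positivity), norm_div, norm_eq_abs, norm_eq_abs,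
    abs_of_pos (by positivity : (0 : ℝ) < (n + 1) * (n + y)), div_eq_mul_inv,
    show (n : ℝ) + y - (n + 1) = y - 1 by ring]
  gcongr

lemma hasSum_inv_add_one_sub_inv_add {y : ℝ} (hy : 0 < y) :
    HasSum (fun n : ℕ => ((n : ℝ) + 1)⁻¹ - ((n : ℝ) + y)⁻¹) (psi y - psi 1) := by
  refine (summable_inv_add_one_sub_inv_add hy).hasSum_iff_tendsto_nat.mpr ?_
  have hpartial (N : ℕ) : ∑ n ∈ range N, (((n : ℝ) + 1)⁻¹ - ((n : ℝ) + y)⁻¹)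
      = psi y - psi 1 - ((psi (y + N) - log N) - (psi (1 + N) - log N)) := by
    rw [sum_sub_distrib, psi_add_nat hy, psi_add_nat one_pos]
    ring
  simpa [hpartial] using tendsto_const_nhds.sub
    ((tendsto_psi_add_nat_sub_log hy).sub (tendsto_psi_add_nat_sub_log one_pos))

lemma hasDerivAt_tsum_of_hasDerivAt_inv_pow {k : ℕ} (hk : 1 ≤ k) {c : ℝ}
    {f : ℕ → ℝ → ℝ}
    (hf : ∀ n (w : ℝ), 0 < w → HasDerivAt (f n) (c * (((n : ℝ) + w) ^ (k + 1))⁻¹) w)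
    {y : ℝ} (hy : 0 < y) (hsum : Summable fun n => f n y) :
    HasDerivAt (fun w => ∑' n, f n w) (c * hurwitzZetaNat (k + 1) y) y := by
  have hy2 : 0 < y / 2 := half_pos hy
  have key := hasDerivAt_tsum_of_isPreconnected
    ((summable_inv_add_pow (by omega : 2 ≤ k + 1) (y / 2)).mul_left |c|) isOpen_Ioi
    isPreconnected_Ioi (fun n w hw => hf n w (hy2.trans hw)) ?_
    (by simpa : y ∈ Set.Ioi (y / 2)) hsum (by simpa : y ∈ Set.Ioi (y / 2))
  · rwa [tsum_mul_left] at key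
  intro n w hw
  have hw' : y / 2 < w := hw
  have hnw : 0 < (n : ℝ) + w := by linarith [(n.cast_nonneg : (0 : ℝ) ≤ n)]
  rw [norm_mul, norm_inv, norm_pow, norm_eq_abs, norm_eq_abs, abs_of_pos hnw]
  gcongr

lemma hasDerivAt_hurwitzZetaNat {k : ℕ} (hk : 2 ≤ k) {y : ℝ} (hy : 0 < y) :
    HasDerivAt (hurwitzZetaNat k) (-k * hurwitzZetaNat (k + 1) y) y :=
  hasDerivAt_tsum_of_hasDerivAt_inv_pow (by omega)
    (fun n w hw => (hasDerivAt_inv_add_pow k (by positivity)).congr_deriv (neg_mul _ _).symm) hy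
    (summable_inv_add_pow hk y)

lemma hasDerivAt_psi {y : ℝ} (hy : 0 < y) : HasDerivAt psi (hurwitzZetaNat 2 y) y := by
  have hD := (hasDerivAt_tsum_of_hasDerivAt_inv_pow le_rfl (c := 1)
    (f := fun n w => ((n : ℝ) + 1)⁻¹ - ((n : ℝ) + w)⁻¹)
    (fun n w hw => by simpa using (hasDerivAt_inv_add_pow 1 (by positivity)).const_sub _) hy
    (summable_inv_add_one_sub_inv_add hy)).const_add (psi 1)
  rw [one_mul] at hD
  refine hD.congr_of_eventuallyEq ?_
  filter_upwards [eventually_gt_nhds hy] with w hw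
  rw [(hasSum_inv_add_one_sub_inv_add hw).tsum_eq]
  ring

lemma iteratedDeriv_psi (m : ℕ) {y : ℝ} (hy : 0 < y) :
    iteratedDeriv (m + 1) psi y = (-1) ^ m * (m + 1).factorial * hurwitzZetaNat (m + 2) y := by
  induction m generalizing y with
  | zero => simp [(hasDerivAt_psi hy).deriv]
  | succ m ih =>
    have hloc : iteratedDeriv (m + 1) psi =ᶠ[𝓝 y]
        fun w => (-1) ^ m * (m + 1).factorial * hurwitzZetaNat (m + 2) w := by
      filter_upwards [eventually_gt_nhds hy] with w hw using ih hw
    rw [iteratedDeriv_succ, hloc.deriv_eq,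
      ((hasDerivAt_hurwitzZetaNat (by omega) hy).const_mul _).deriv, Nat.factorial_succ (m + 1)]
    push_cast
    ring

lemma hurwitzZetaNat_one_add (k : ℕ) (t : ℝ) :
    hurwitzZetaNat k (1 + t) = ∑' n : ℕ+, (((n : ℝ) + t) ^ k)⁻¹ := by
  rw [hurwitzZetaNat, tsum_pnat_eq_tsum_succ (f := fun n : ℕ => (((n : ℝ) + t) ^ k)⁻¹)]
  simp only [Nat.cast_succ, add_assoc, add_comm 1 t]

lemma sqrt_mul_pow_three_le {a b : ℝ} (ha : 1 ≤ a) (hb : 1 ≤ b) {k : ℕ} (hk : 3 ≤ k) :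
    √(a * b) ^ 3 ≤ (a + b) ^ k := by
  have h1 : 1 ≤ √(a * b) := one_le_sqrt.mpr (by nlinarith)
  have h2 : √(a * b) ≤ a + b := sqrt_le_iff.mpr ⟨by linarith, by nlinarith⟩
  calc √(a * b) ^ 3 ≤ √(a * b) ^ k := pow_le_pow_right₀ h1 hk
    _ ≤ (a + b) ^ k := by gcongr

lemma summable_inv_sqrt_pow_three : Summable fun n : ℕ+ => (√(n : ℝ) ^ 3)⁻¹ := by
  refine ((summable_nat_rpow_inv.mpr (by norm_num : (1 : ℝ) < 3 / 2)).comp_injective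
    PNat.coe_injective).congr fun n => ?_
  rw [Function.comp_apply, sqrt_eq_rpow, ← rpow_natCast, ← rpow_mul n.val.cast_nonneg]
  norm_num

lemma summable_inv_add_mul_pow {k : ℕ} (hk : 3 ≤ k) {x : ℝ} (hx : 0 < x) :
    Summable fun p : ℕ+ × ℕ+ => (((p.2 : ℝ) + p.1 * x) ^ k)⁻¹ := by
  set c := min 1 x
  have hc : 0 < c := lt_min one_pos hx
  -- `n + j x ≥ c (j + n) ≥ c √(j n)`, and `(j n) ^ (-3/2)` is summable over pairs.
  have hprod := summable_inv_sqrt_pow_three.mul_of_nonneg summable_inv_sqrt_pow_three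
    (fun _ => by positivity) (fun _ => by positivity)
  refine (hprod.mul_left (c ^ k)⁻¹).of_nonneg_of_le (fun _ => by positivity) fun ⟨j, n⟩ => ?_
  have hj : (1 : ℝ) ≤ j := Nat.one_le_cast.mpr j.pos
  have hn : (1 : ℝ) ≤ n := Nat.one_le_cast.mpr n.pos
  have hlin : c * (j + n) ≤ (n : ℝ) + j * x := by
    nlinarith [min_le_left 1 x, min_le_right 1 x]
  rw [← mul_inv, ← mul_inv, ← mul_pow, ← sqrt_mul (by positivity)]
  refine inv_anti₀ (by positivity) ?_
  calc c ^ k * √(j * n) ^ 3 ≤ c ^ k * (j + n) ^ k := by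
        gcongr; exact sqrt_mul_pow_three_le hj hn hk
    _ = (c * (j + n)) ^ k := (mul_pow _ _ _).symm
    _ ≤ _ := by gcongr

noncomputable def latticeSum (k : ℕ) (x : ℝ) : ℝ :=
  ∑' p : ℕ+ × ℕ+, (((p.2 : ℝ) + p.1 * x) ^ k)⁻¹

lemma latticeSum_inv (k : ℕ) {x : ℝ} (hx : x ≠ 0) :
    latticeSum k x⁻¹ = x ^ k * latticeSum k x := by
  rw [latticeSum, latticeSum, ← tsum_mul_left, ← (Equiv.prodComm ℕ+ ℕ+).tsum_eq]
  congr 1 with p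
  simp only [Equiv.prodComm_apply, Prod.fst_swap, Prod.snd_swap]
  rw [show (p.1 : ℝ) + p.2 * x⁻¹ = (p.2 + p.1 * x) * x⁻¹ by field_simp; ring, mul_pow,
    inv_pow, mul_inv, inv_inv, mul_comm]

lemma hasSum_hurwitzZetaNat_one_add_mul {k : ℕ} (hk : 3 ≤ k) {x : ℝ} (hx : 0 < x) :
    HasSum (fun j : ℕ+ => hurwitzZetaNat k (1 + j * x)) (latticeSum k x) := by
  have hF := (summable_inv_add_mul_pow hk hx).hasSum
  refine hF.prod_fiberwise fun j => ?_
  rw [hurwitzZetaNat_one_add]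
  exact (hF.summable.prod_factor j).hasSum

lemma hasSum_iteratedDeriv_psi_one_add_mul (m : ℕ) {x : ℝ} (hx : 0 < x) :
    HasSum (fun j : ℕ+ => iteratedDeriv (m + 2) psi (1 + j * x))
      ((-1) ^ (m + 1) * (m + 2).factorial * latticeSum (m + 3) x) := by
  refine ((hasSum_hurwitzZetaNat_one_add_mul (by omega) hx).mul_left _).congr_fun fun j => ?_
  exact iteratedDeriv_psi (m + 1) (by positivity)

theorem stmt8 (z : ℕ) (hz : 2 < z) (x : ℝ) (hx : 0 < x) :
    x ^ ((z : ℝ) / 2) * (∑' j : ℕ+, iteratedDeriv (z - 1) psi (1 + (j : ℝ) * x))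
      = x ^ (-((z : ℝ) / 2)) * (∑' j : ℕ+, iteratedDeriv (z - 1) psi (1 + (j : ℝ) / x))
    ∧ Summable (fun j : ℕ+ => iteratedDeriv (z - 1) psi (1 + (j : ℝ) * x))
    ∧ Summable (fun j : ℕ+ => iteratedDeriv (z - 1) psi (1 + (j : ℝ) / x)) := by
  obtain ⟨m, rfl⟩ : ∃ m, z = m + 3 := ⟨z - 3, by omega⟩
  have h₁ := hasSum_iteratedDeriv_psi_one_add_mul m hx
  have h₂ := hasSum_iteratedDeriv_psi_one_add_mul m (inv_pos.mpr hx)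
  simp only [← div_eq_mul_inv] at h₂
  rw [show m + 3 - 1 = m + 2 from rfl]
  refine ⟨?_, h₁.summable, h₂.summable⟩
  have hpow : x ^ (-((m + 3 : ℕ) / 2 : ℝ)) * x ^ (m + 3) = x ^ ((m + 3 : ℕ) / 2 : ℝ) := by
    rw [← rpow_natCast, ← rpow_add hx]
    ring_nf
  rw [h₁.tsum_eq, h₂.tsum_eq, latticeSum_inv _ hx.ne', ← hpow]
  ring
end

section
/- Let x > 0. Then x Σ_{j=1}^∞ ( ψ'(1 + jx) − 1/(jx) ) − (1/2) log x = (1/x) Σ_{j=1}^∞ ( ψ'(1 + j/x) − x/j ) − (1/2) log(1/x), where ψ' is the derivative (trigamma function) of the digamma function; both series converge absolutely. -/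
/-!
For `t > 0`, `ψ'(1 + t) = ∑_{m ≥ 1} (t + m)⁻²`: differentiate the Gauss limit
`log Γ = lim logGammaSeq` (uniformly convergent derivatives), then the resulting series for `ψ`
termwise. Hence `x ψ'(1 + j x) = ∑_m x / (j x + m)²` and `x⁻¹ ψ'(1 + j / x) = ∑_m x / (j + m x)²`,
so in the `N`-th partial sum of the difference of the two series the block `j, m ≤ N` cancels,
leaving the tails `∑_{j ≤ N} c ψ'(1 + N + j c)` for `c = x` and `c = 1 / x`. Squeezing
`1 / (1 + t) ≤ ψ'(1 + t) ≤ 1 / t` against telescoping sums of logarithms, such a tail tends to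
`log (1 + c)`, and `log (1 + x) - log (1 + 1 / x) = log x`.
-/

open Real Filter Topology Finset

noncomputable def digammaSeries (t : ℝ) : ℝ :=
  -eulerMascheroniConstant + ∑' k : ℕ, (1 / ((k : ℝ) + 1) - 1 / (t + (k + 1)))

noncomputable def trigammaSeries (t : ℝ) : ℝ := ∑' k : ℕ, 1 / (t + (k + 1)) ^ 2

lemma summable_one_div_add_nat_add_one_sq (t : ℝ) :
    Summable fun k : ℕ => 1 / (t + (k + 1)) ^ 2 := by
  refine ((Real.summable_one_div_nat_add_rpow (t + 1) 2).2 one_lt_two).congr fun k => ?_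
  rw [Real.rpow_two, sq_abs]
  ring_nf

lemma summable_one_div_nat_add_one_sq : Summable fun k : ℕ => 1 / ((k : ℝ) + 1) ^ 2 := by
  simpa using summable_one_div_add_nat_add_one_sq 0

lemma abs_one_div_sub_one_div_add_le {t : ℝ} (ht : 0 ≤ t) (k : ℕ) :
    |1 / ((k : ℝ) + 1) - 1 / (t + (k + 1))| ≤ t / ((k : ℝ) + 1) ^ 2 := by
  have hk : (0 : ℝ) < k + 1 := by positivity
  have hdiff : 1 / ((k : ℝ) + 1) - 1 / (t + (k + 1)) = t / ((k + 1) * (t + (k + 1))) := by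
    field_simp
    ring
  rw [hdiff, abs_of_nonneg (by positivity), sq]
  exact div_le_div_of_nonneg_left ht (by positivity)
    (mul_le_mul_of_nonneg_left (by linarith) hk.le)

lemma summable_one_div_sub_one_div_add {t : ℝ} (ht : 0 ≤ t) :
    Summable fun k : ℕ => 1 / ((k : ℝ) + 1) - 1 / (t + (k + 1)) :=
  .of_norm_bounded (summable_one_div_nat_add_one_sq.mul_left t) fun k => by
    simpa [div_eq_mul_inv] using abs_one_div_sub_one_div_add_le ht k

lemma hasDerivAt_digammaSeries {t : ℝ} (ht : 0 < t) :
    HasDerivAt digammaSeries (trigammaSeries t) t := by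
  have hterm : ∀ (k : ℕ) (z : ℝ), z ∈ Set.Ioi (0 : ℝ) → HasDerivAt
      (fun z => 1 / ((k : ℝ) + 1) - 1 / (z + (k + 1))) (1 / (z + (k + 1)) ^ 2) z := by
    intro k z (hz : 0 < z)
    have hz' : z + (k + 1) ≠ 0 := by positivity
    simpa [one_div, neg_div] using
      ((hasDerivAt_id z).add_const ((k : ℝ) + 1)).inv hz' |>.const_sub _
  have hbound : ∀ (k : ℕ) (z : ℝ), z ∈ Set.Ioi (0 : ℝ) →
      ‖1 / (z + (k + 1)) ^ 2‖ ≤ 1 / ((k : ℝ) + 1) ^ 2 := by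
    intro k z (hz : 0 < z)
    rw [norm_of_nonneg (by positivity)]
    exact one_div_le_one_div_of_le (by positivity)
      (pow_le_pow_left₀ (by positivity) (by linarith) 2)
  exact (hasDerivAt_tsum_of_isPreconnected summable_one_div_nat_add_one_sq isOpen_Ioi
    isPreconnected_Ioi hterm hbound ht (summable_one_div_sub_one_div_add ht.le) ht).const_add _

lemma hasDerivAt_logGammaSeq_add_log (n : ℕ) {t : ℝ} (ht : 0 < t) :
    HasDerivAt (fun s => BohrMollerup.logGammaSeq s n + log s)
      (log n - harmonic n + ∑ k ∈ range n, (1 / ((k : ℝ) + 1) - 1 / (t + (k + 1)))) t := by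
  have hlog : ∀ k ∈ range (n + 1), HasDerivAt (fun s => log (s + k)) (1 / (t + k)) t := by
    intro k _
    simpa using ((hasDerivAt_id t).add_const (k : ℝ)).log (by positivity)
  refine ((((hasDerivAt_id t).mul_const (log n)).add_const (log n.factorial)).fun_sub
    (HasDerivAt.fun_sum hlog)).fun_add (hasDerivAt_log ht.ne') |>.congr_deriv ?_
  rw [sum_range_succ', sum_sub_distrib, harmonic]
  push_cast
  simp only [one_div, add_zero, one_mul]
  ring_nf

lemma tendsto_logGammaSeq_add_log {t : ℝ} (ht : 0 < t) :
    Tendsto (fun n : ℕ => BohrMollerup.logGammaSeq t n + log t) atTop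
      (𝓝 (log (Gamma (1 + t)))) := by
  rw [add_comm 1 t, Gamma_add_one ht.ne', log_mul ht.ne' (Gamma_pos_of_pos ht).ne', add_comm]
  exact (BohrMollerup.tendsto_log_gamma ht).add_const _

lemma tendstoUniformlyOn_digammaSeries (b : ℝ) :
    TendstoUniformlyOn
      (fun (n : ℕ) t =>
        log n - harmonic n + ∑ k ∈ range n, (1 / ((k : ℝ) + 1) - 1 / (t + (k + 1))))
      digammaSeries atTop (Set.Ioo 0 b) := by
  have hconst :
      Tendsto (fun n : ℕ => log n - harmonic n) atTop (𝓝 (-eulerMascheroniConstant)) := by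
    simpa using tendsto_harmonic_sub_log.neg
  refine (hconst.tendstoUniformlyOn_const _).add
    (tendstoUniformlyOn_tsum_nat (summable_one_div_nat_add_one_sq.mul_left b) ?_)
  intro k t ht
  calc ‖1 / ((k : ℝ) + 1) - 1 / (t + (k + 1))‖ ≤ t / ((k : ℝ) + 1) ^ 2 :=
        abs_one_div_sub_one_div_add_le ht.1.le k
    _ ≤ b * (1 / ((k : ℝ) + 1) ^ 2) := by
        rw [mul_one_div]
        gcongr
        exact ht.2.le

lemma psi_one_add {t : ℝ} (ht : 0 < t) : psi (1 + t) = digammaSeries t := by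
  have hΓ : HasDerivAt Gamma (deriv Gamma (1 + t)) (1 + t) :=
    (differentiableAt_Gamma fun m => by linarith [(m.cast_nonneg : (0 : ℝ) ≤ m)]).hasDerivAt
  have hψ : HasDerivAt (fun s => log (Gamma (1 + s))) (psi (1 + t)) t :=
    (hΓ.log (Gamma_pos_of_pos (by linarith)).ne').comp_const_add 1 t
  have hmem : t ∈ Set.Ioo 0 (t + 1) := ⟨ht, by linarith⟩
  have hseries : HasDerivAt (fun s => log (Gamma (1 + s))) (digammaSeries t) t :=
    hasDerivAt_of_tendstoUniformlyOn isOpen_Ioo (tendstoUniformlyOn_digammaSeries (t + 1))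
      (.of_forall fun n s hs => hasDerivAt_logGammaSeq_add_log n hs.1)
      (fun s hs => tendsto_logGammaSeq_add_log hs.1) hmem
  exact hψ.unique hseries

lemma deriv_psi_one_add {t : ℝ} (ht : 0 < t) : deriv psi (1 + t) = trigammaSeries t := by
  have hev : (fun s => psi (1 + s)) =ᶠ[𝓝 t] digammaSeries :=
    eventually_of_mem (Ioi_mem_nhds ht) fun s hs => psi_one_add hs
  rw [← deriv_comp_const_add, hev.deriv_eq, (hasDerivAt_digammaSeries ht).deriv]

lemma hasSum_one_div_sub_one_div_add_one {c : ℝ} (hc : 0 < c) :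
    HasSum (fun k : ℕ => 1 / (c + k) - 1 / (c + (k + 1))) (1 / c) := by
  have hnonneg : ∀ k : ℕ, 0 ≤ 1 / (c + k) - 1 / (c + (k + 1)) := fun k =>
    sub_nonneg.2 (one_div_le_one_div_of_le (by positivity) (by linarith))
  rw [hasSum_iff_tendsto_nat_of_nonneg hnonneg]
  have hpartial : ∀ n : ℕ,
      ∑ k ∈ range n, (1 / (c + k) - 1 / (c + (k + 1))) = 1 / c - 1 / (c + n) := by
    intro n
    simpa using sum_range_sub' (fun k : ℕ => 1 / (c + k)) n
  simp only [hpartial]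
  have hinv : Tendsto (fun n : ℕ => (c + n)⁻¹) atTop (𝓝 0) :=
    (tendsto_atTop_add_const_left _ c tendsto_natCast_atTop_atTop).inv_tendsto_atTop
  simpa using hinv.const_sub (1 / c)

lemma one_div_add_one_sq_le_one_div_sub_one_div_add_one {a : ℝ} (ha : 0 < a) :
    1 / (a + 1) ^ 2 ≤ 1 / a - 1 / (a + 1) := by
  rw [div_sub_div _ _ ha.ne' (by positivity), show 1 * (a + 1) - a * 1 = 1 by ring]
  apply one_div_le_one_div_of_le (by positivity)
  nlinarith

lemma one_div_sub_one_div_add_one_le_one_div_sq {a : ℝ} (ha : 0 < a) :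
    1 / a - 1 / (a + 1) ≤ 1 / a ^ 2 := by
  rw [div_sub_div _ _ ha.ne' (by positivity), show 1 * (a + 1) - a * 1 = 1 by ring]
  apply one_div_le_one_div_of_le (by positivity)
  nlinarith

lemma trigammaSeries_le_one_div {t : ℝ} (ht : 0 < t) : trigammaSeries t ≤ 1 / t :=
  hasSum_le (fun k => by simpa only [add_assoc] using
      one_div_add_one_sq_le_one_div_sub_one_div_add_one (a := t + k) (by positivity))
    (summable_one_div_add_nat_add_one_sq t).hasSum (hasSum_one_div_sub_one_div_add_one ht)

lemma one_div_one_add_le_trigammaSeries {t : ℝ} (ht : 0 ≤ t) :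
    1 / (1 + t) ≤ trigammaSeries t :=
  hasSum_le (fun k => by
      have h := one_div_sub_one_div_add_one_le_one_div_sq (a := 1 + t + k) (by positivity)
      ring_nf at h ⊢
      exact h)
    (hasSum_one_div_sub_one_div_add_one (by positivity))
    (summable_one_div_add_nat_add_one_sq t).hasSum

lemma trigammaSeries_eq_sum_range_add (t : ℝ) (N : ℕ) :
    trigammaSeries t = ∑ m ∈ range N, 1 / (t + (m + 1)) ^ 2 + trigammaSeries (t + N) := by
  rw [trigammaSeries, ← (summable_one_div_add_nat_add_one_sq t).sum_add_tsum_nat_add N,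
    trigammaSeries]
  congr 1
  refine tsum_congr fun m => ?_
  push_cast
  ring_nf

lemma one_sub_div_le_log_sub_log {a b : ℝ} (ha : 0 < a) (hb : 0 < b) :
    1 - a / b ≤ log b - log a := by
  rw [← log_div hb.ne' ha.ne']
  simpa using one_sub_inv_le_log_of_pos (div_pos hb ha)

lemma log_sub_log_le_div_sub_one {a b : ℝ} (ha : 0 < a) (hb : 0 < b) :
    log b - log a ≤ b / a - 1 := by
  rw [← log_div hb.ne' ha.ne']
  exact log_le_sub_one_of_pos (div_pos hb ha)

noncomputable def trigammaTailSum (c : ℝ) (N : ℕ) : ℝ :=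
  ∑ j ∈ range N, c * trigammaSeries ((j + 1) * c + N)

variable {c : ℝ}

lemma trigammaTailSum_le_log_one_add (hc : 0 < c) {N : ℕ} (hN : 0 < N) :
    trigammaTailSum c N ≤ log (1 + c) := by
  have hN' : (0 : ℝ) < N := by exact_mod_cast hN
  set F : ℕ → ℝ := fun j => log (N + j * c)
  have hstep : ∀ j ∈ range N, c * trigammaSeries ((j + 1) * c + N) ≤ F (j + 1) - F j := by
    intro j _
    have hpos : 0 < ((j : ℝ) + 1) * c + N := by positivity
    calc c * trigammaSeries ((j + 1) * c + N) ≤ c * (1 / ((j + 1) * c + N)) :=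
          mul_le_mul_of_nonneg_left (trigammaSeries_le_one_div hpos) hc.le
      _ = 1 - (N + j * c) / (N + (j + 1) * c) := by field_simp; ring
      _ ≤ F (j + 1) - F j := by
          simp only [F]
          push_cast
          exact one_sub_div_le_log_sub_log (by positivity) (by positivity)
  calc trigammaTailSum c N ≤ ∑ j ∈ range N, (F (j + 1) - F j) := sum_le_sum hstep
    _ = F N - F 0 := sum_range_sub F N
    _ = log (1 + c) := by
        simp only [F, Nat.cast_zero, zero_mul, add_zero]
        rw [show (N : ℝ) + N * c = N * (1 + c) by ring, log_mul hN'.ne' (by positivity)]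
        ring

lemma log_one_add_sub_div_le_trigammaTailSum (hc : 0 < c) (N : ℕ) :
    log (1 + c) - c / (N + 1) ≤ trigammaTailSum c N := by
  set G : ℕ → ℝ := fun j => log (N + 1 + (j + 1) * c)
  have hstep : ∀ j ∈ range N, G (j + 1) - G j ≤ c * trigammaSeries ((j + 1) * c + N) := by
    intro j _
    have hpos : 0 ≤ ((j : ℝ) + 1) * c + N := by positivity
    calc G (j + 1) - G j ≤ (N + 1 + (j + 1 + 1) * c) / (N + 1 + (j + 1) * c) - 1 := by
          simp only [G]
          push_cast
          exact log_sub_log_le_div_sub_one (by positivity) (by positivity)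
      _ = c * (1 / (1 + ((j + 1) * c + N))) := by field_simp; ring
      _ ≤ c * trigammaSeries ((j + 1) * c + N) :=
          mul_le_mul_of_nonneg_left (one_div_one_add_le_trigammaSeries hpos) hc.le
  have hends : log (1 + c) - c / (N + 1) ≤ G N - G 0 := by
    have h := log_sub_log_le_div_sub_one (a := (N : ℝ) + 1) (b := N + 1 + c) (by positivity)
      (by positivity)
    simp only [G, Nat.cast_zero, zero_add, one_mul]
    rw [show (N : ℝ) + 1 + (N + 1) * c = (N + 1) * (1 + c) by ring,
      log_mul (by positivity) (by positivity)]
    rw [show (N + 1 + c) / ((N : ℝ) + 1) - 1 = c / (N + 1) by field_simp; ring] at h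
    linarith
  calc log (1 + c) - c / (N + 1) ≤ G N - G 0 := hends
    _ = ∑ j ∈ range N, (G (j + 1) - G j) := (sum_range_sub G N).symm
    _ ≤ trigammaTailSum c N := sum_le_sum hstep

lemma tendsto_trigammaTailSum (hc : 0 < c) :
    Tendsto (trigammaTailSum c) atTop (𝓝 (log (1 + c))) := by
  have hlower : Tendsto (fun N : ℕ => log (1 + c) - c / (N + 1)) atTop (𝓝 (log (1 + c))) := by
    simpa [div_eq_mul_inv] using
      (tendsto_one_div_add_atTop_nhds_zero_nat.const_mul c).const_sub (log (1 + c))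
  refine tendsto_of_tendsto_of_tendsto_of_le_of_le' hlower tendsto_const_nhds
    (.of_forall (log_one_add_sub_div_le_trigammaTailSum hc)) ?_
  filter_upwards [eventually_gt_atTop 0] with N hN
  exact trigammaTailSum_le_log_one_add hc hN

lemma sum_range_mul_trigammaSeries (c : ℝ) (N : ℕ) :
    ∑ j ∈ range N, c * trigammaSeries ((j + 1) * c)
      = ∑ j ∈ range N, ∑ m ∈ range N, c / ((j + 1) * c + (m + 1)) ^ 2
        + trigammaTailSum c N := by
  rw [trigammaTailSum, ← sum_add_distrib]
  refine sum_congr rfl fun j _ => ?_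
  rw [trigammaSeries_eq_sum_range_add _ N, mul_add, mul_sum]
  simp only [mul_one_div]

lemma sum_range_sub_eq_trigammaTailSum_sub {x : ℝ} (hx : 0 < x) (N : ℕ) :
    ∑ j ∈ range N,
        (x * trigammaSeries ((j + 1) * x) - x⁻¹ * trigammaSeries ((j + 1) * x⁻¹))
      = trigammaTailSum x N - trigammaTailSum x⁻¹ N := by
  have hswap : ∀ j m : ℕ,
      x⁻¹ / ((j + 1) * x⁻¹ + (m + 1)) ^ 2 = x / ((m + 1) * x + (j + 1)) ^ 2 := by
    intro j m
    field_simp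
    ring
  rw [sum_sub_distrib, sum_range_mul_trigammaSeries, sum_range_mul_trigammaSeries]
  simp only [hswap]
  rw [sum_comm (f := fun j m : ℕ => x / ((m + 1) * x + (j + 1)) ^ 2)]
  ring

lemma summable_mul_trigammaSeries_sub (hc : 0 < c) :
    Summable fun j : ℕ => c * trigammaSeries ((j + 1) * c) - 1 / (j + 1) := by
  refine .of_norm_bounded (summable_one_div_nat_add_one_sq.mul_left c⁻¹) fun j => ?_
  have hpos : 0 < ((j : ℝ) + 1) * c := by positivity
  have hupper : c * trigammaSeries ((j + 1) * c) ≤ 1 / (j + 1) := by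
    calc c * trigammaSeries ((j + 1) * c) ≤ c * (1 / ((j + 1) * c)) :=
          mul_le_mul_of_nonneg_left (trigammaSeries_le_one_div hpos) hc.le
      _ = 1 / (j + 1) := by field_simp
  have hlower : 1 / (j + 1) - c⁻¹ * (1 / ((j : ℝ) + 1) ^ 2)
      ≤ c * trigammaSeries ((j + 1) * c) := by
    calc 1 / (j + 1) - c⁻¹ * (1 / ((j : ℝ) + 1) ^ 2)
        ≤ c * (1 / (1 + (j + 1) * c)) := by
          rw [sub_le_iff_le_add, ← sub_le_iff_le_add',
            show 1 / ((j : ℝ) + 1) - c * (1 / (1 + (j + 1) * c))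
              = 1 / ((j + 1) * (1 + (j + 1) * c)) by field_simp; ring,
            inv_mul_eq_div, div_div, div_le_div_iff₀ (by positivity) (by positivity)]
          nlinarith
      _ ≤ c * trigammaSeries ((j + 1) * c) :=
          mul_le_mul_of_nonneg_left (one_div_one_add_le_trigammaSeries hpos.le) hc.le
  rw [Real.norm_eq_abs, abs_le]
  constructor <;> linarith

lemma tsum_mul_trigammaSeries_sub_tsum_inv_mul_trigammaSeries_eq_log {x : ℝ} (hx : 0 < x) :
    ∑' j : ℕ, (x * trigammaSeries ((j + 1) * x) - 1 / (j + 1))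
      - ∑' j : ℕ, (x⁻¹ * trigammaSeries ((j + 1) * x⁻¹) - 1 / (j + 1)) = log x := by
  have hpartial := ((summable_mul_trigammaSeries_sub hx).hasSum.sub
    (summable_mul_trigammaSeries_sub (inv_pos.2 hx)).hasSum).tendsto_sum_nat
  have htail : Tendsto (fun N => trigammaTailSum x N - trigammaTailSum x⁻¹ N) atTop
      (𝓝 (log x)) := by
    have hlog : log (1 + x) - log (1 + x⁻¹) = log x := by
      rw [show 1 + x⁻¹ = (1 + x) / x by field_simp; ring, log_div (by positivity) hx.ne']
      ring
    rw [← hlog]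
    exact (tendsto_trigammaTailSum hx).sub (tendsto_trigammaTailSum (inv_pos.2 hx))
  refine tendsto_nhds_unique (hpartial.congr fun N => ?_) htail
  rw [← sum_range_sub_eq_trigammaTailSum_sub hx]
  exact sum_congr rfl fun j _ => by ring

theorem stmt9 (x : ℝ) (hx : 0 < x) :
    x * (∑' j : ℕ+, (deriv psi (1 + (j : ℝ) * x) - 1 / ((j : ℝ) * x))) - (1 / 2) * Real.log x
      = (1 / x) * (∑' j : ℕ+, (deriv psi (1 + (j : ℝ) / x) - x / (j : ℝ)))
          - (1 / 2) * Real.log (1 / x)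
    ∧ Summable (fun j : ℕ+ => deriv psi (1 + (j : ℝ) * x) - 1 / ((j : ℝ) * x))
    ∧ Summable (fun j : ℕ+ => deriv psi (1 + (j : ℝ) / x) - x / (j : ℝ)) := by
  have hx' : 0 < x⁻¹ := inv_pos.2 hx
  set f : ℕ → ℝ := fun n => deriv psi (1 + n * x) - 1 / (n * x)
  set g : ℕ → ℝ := fun n => deriv psi (1 + n / x) - x / n
  have hf : ∀ n : ℕ, f (n + 1) = x⁻¹ * (x * trigammaSeries ((n + 1) * x) - 1 / (n + 1)) := by
    intro n
    simp only [f]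
    push_cast
    rw [deriv_psi_one_add (by positivity)]
    field_simp
  have hg : ∀ n : ℕ,
      g (n + 1) = x * (x⁻¹ * trigammaSeries ((n + 1) * x⁻¹) - 1 / (n + 1)) := by
    intro n
    simp only [g]
    push_cast
    rw [div_eq_mul_inv, deriv_psi_one_add (by positivity)]
    field_simp
  rw [summable_pnat_iff_summable_succ (f := f), summable_pnat_iff_summable_succ (f := g),
    tsum_pnat_eq_tsum_succ (f := f), tsum_pnat_eq_tsum_succ (f := g)]
  simp only [hf, hg, tsum_mul_left]
  refine ⟨?_, (summable_mul_trigammaSeries_sub hx).mul_left _,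
    (summable_mul_trigammaSeries_sub hx').mul_left _⟩
  have hlog := tsum_mul_trigammaSeries_sub_tsum_inv_mul_trigammaSeries_eq_log hx
  rw [one_div x, log_inv, ← mul_assoc, ← mul_assoc, mul_inv_cancel₀ hx.ne',
    inv_mul_cancel₀ hx.ne']
  linarith
end

section
/- Let x > 0, let r ≥ 1 be an integer, and let t be a complex number with Re(t) > 0. Then ∫_0^∞ y^{t−1} e^{−xy} Li_r(e^{−y}) dy = Γ(t) Σ_{n=1}^∞ 1/( n^r (x+n)^t ), where the integral converges absolutely and the series on the right converges absolutely. -/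
/-!
Expanding `Li_r(e^{-y}) = ∑ e^{-n y} / n^r`, the integrand becomes the series
`∑ n^{-r} y^{t-1} e^{-(x+n) y}`, whose `n`-th term integrates to `Γ(t) n^{-r} (x+n)^{-t}`.
Integrating term by term is legitimate because the integrals of the absolute values,
`Γ(Re t) n^{-r} (x+n)^{-Re t} ≤ Γ(Re t) n^{-1-Re t}`, are summable.
-/

open Real Filter Topology Finset

noncomputable def polylog (r : ℕ) (z : ℝ) : ℝ := ∑' u : ℕ+, z ^ (u : ℕ) / (u : ℝ) ^ r

open MeasureTheory

open scoped ENNReal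

theorem MeasureTheory.integrable_tsum_of_summable_integral_norm {α E ι : Type*}
    [MeasurableSpace α] {μ : Measure α} [NormedAddCommGroup E] [NormedSpace ℝ E] [CompleteSpace E]
    [Countable ι] {F : ι → α → E} (hF_int : ∀ i, Integrable (F i) μ)
    (hF_sum : Summable fun i ↦ ∫ a, ‖F i a‖ ∂μ) :
    Integrable (fun a ↦ ∑' i, F i a) μ := by
  set f : ι → α →₁[μ] E := fun i ↦ (hF_int i).toL1 (F i)
  have hf : ∑' i, ‖f i‖ₑ ≠ ∞ := tsum_enorm_ne_top_iff_summable_norm.2 <|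
    hF_sum.congr fun i ↦ (L1.norm_of_fun_eq_integral_norm (hF_int i)).symm
  have hfF : ∀ᵐ a ∂μ, ∀ i, f i a = F i a := ae_all_iff.2 fun i ↦ (hF_int i).coeFn_toL1
  refine (L1.integrable_coeFn (∑' i, f i)).congr ?_
  filter_upwards [Lp.coeFn_tsum hf, hfF] with a hsum hfFa
  rw [hsum]
  exact tsum_congr hfFa

theorem mellinConvergent_of_hasSum {ι : Type*} [Countable ι] {a : ι → ℂ} {p : ι → ℝ}
    {F : ℝ → ℂ} {s : ℂ} (hp : ∀ i, 0 < p i) (hs : 0 < s.re)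
    (hF : ∀ t ∈ Set.Ioi 0, HasSum (fun i ↦ a i * rexp (-p i * t)) (F t))
    (h_sum : Summable fun i ↦ ‖a i‖ / p i ^ s.re) :
    MellinConvergent F s := by
  set G : ι → ℝ → ℂ := fun i t ↦ (t : ℂ) ^ (s - 1) * (a i * rexp (-p i * t))
  have hG_int (i : ι) : IntegrableOn (G i) (Set.Ioi 0) := by
    have hexp : MellinConvergent (fun t : ℝ ↦ (rexp (-t) : ℂ)) s := by
      simpa only [MellinConvergent, smul_eq_mul, Complex.ofReal_exp, Complex.ofReal_neg,
        mul_comm] using Complex.GammaIntegral_convergent hs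
    simpa only [G, MellinConvergent, smul_eq_mul, neg_mul] using
      ((MellinConvergent.comp_mul_left (hp i)).2 hexp).const_smul (a i)
  have hG_norm (i : ι) :
      ∫ t in Set.Ioi 0, ‖G i t‖ = ‖a i‖ / p i ^ s.re * Real.Gamma s.re := by
    have h := Real.integral_rpow_mul_exp_neg_mul_Ioi hs (hp i)
    rw [one_div, inv_rpow (hp i).le] at h
    rw [div_mul_eq_mul_div, mul_div_assoc, ← inv_mul_eq_div, ← h, ← integral_const_mul]
    refine setIntegral_congr_fun measurableSet_Ioi fun t (ht : 0 < t) ↦ ?_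
    simp only [G, norm_mul, Complex.norm_real, Real.norm_eq_abs, Real.abs_exp,
      Complex.norm_cpow_eq_rpow_re_of_pos ht, Complex.sub_re, Complex.one_re, neg_mul]
    ring
  have hG_sum : Summable fun i ↦ ∫ t in Set.Ioi 0, ‖G i t‖ := by
    simpa only [hG_norm] using h_sum.mul_right (Real.Gamma s.re)
  refine IntegrableOn.congr_fun (integrable_tsum_of_summable_integral_norm hG_int hG_sum)
    (fun t ht ↦ ?_) measurableSet_Ioi
  rw [smul_eq_mul, ← ((hF t ht).mul_left _).tsum_eq]

theorem hasSum_polylog (r : ℕ) {z : ℝ} (hz : |z| < 1) :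
    HasSum (fun u : ℕ+ ↦ z ^ (u : ℕ) / (u : ℝ) ^ r) (polylog r z) := by
  refine Summable.hasSum (Summable.of_norm_bounded
    ((summable_geometric_of_abs_lt_one hz).abs.comp_injective PNat.coe_injective) fun u ↦ ?_)
  simp only [norm_div, norm_pow, Real.norm_eq_abs, Nat.abs_cast, Function.comp_apply, abs_pow]
  exact div_le_self (by positivity) (one_le_pow₀ (Nat.one_le_cast.2 u.pos))

theorem hasSum_exp_neg_mul_polylog (r : ℕ) (x : ℝ) {y : ℝ} (hy : 0 < y) :
    HasSum (fun n : ℕ+ ↦ 1 / (n : ℂ) ^ r * rexp (-(x + n) * y))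
      (Complex.exp (-((x * y : ℝ) : ℂ)) * (polylog r (rexp (-y)) : ℂ)) := by
  have hz : |rexp (-y)| < 1 := by rw [abs_exp, Real.exp_lt_one_iff]; linarith
  refine ((Complex.hasSum_ofReal.2 (hasSum_polylog r hz)).mul_left _).congr_fun fun n ↦ ?_
  have hexp : rexp (-(x + n) * y) = rexp (-(x * y)) * rexp (-y) ^ (n : ℕ) := by
    rw [← Real.exp_nat_mul, ← Real.exp_add]
    ring_nf
  rw [hexp]
  push_cast
  ring

theorem summable_one_div_pow_mul_rpow {r : ℕ} (hr : 1 ≤ r) {x σ : ℝ} (hx : 0 ≤ x) (hσ : 0 < σ) :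
    Summable fun n : ℕ+ ↦ 1 / ((n : ℝ) ^ r * (x + n) ^ σ) := by
  have hsum : Summable fun n : ℕ+ ↦ 1 / (n : ℝ) ^ (1 + σ) :=
    ((Real.summable_one_div_nat_rpow).2 (by linarith)).comp_injective PNat.coe_injective
  refine hsum.of_nonneg_of_le (fun n ↦ by positivity) fun n ↦ ?_
  have hn : (1 : ℝ) ≤ n := Nat.one_le_cast.2 n.pos
  rw [Real.rpow_add (by positivity), Real.rpow_one]
  gcongr
  · exact le_self_pow₀ hn (by omega)
  · linarith

theorem stmt12 (x : ℝ) (hx : 0 < x) (r : ℕ) (hr : 1 ≤ r) (t : ℂ) (ht : 0 < t.re) :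
    (∫ y in Set.Ioi (0 : ℝ),
        (y : ℂ) ^ (t - 1) * Complex.exp (-((x * y : ℝ) : ℂ)) * (polylog r (Real.exp (-y)) : ℂ))
      = Complex.Gamma t * ∑' n : ℕ+, 1 / ((n : ℂ) ^ r * ((x : ℂ) + (n : ℂ)) ^ t)
    ∧ MeasureTheory.IntegrableOn
        (fun y : ℝ =>
          (y : ℂ) ^ (t - 1) * Complex.exp (-((x * y : ℝ) : ℂ)) * (polylog r (Real.exp (-y)) : ℂ))
        (Set.Ioi 0)
    ∧ Summable (fun n : ℕ+ => 1 / ((n : ℂ) ^ r * ((x : ℂ) + (n : ℂ)) ^ t)) := by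
  set F : ℝ → ℂ := fun y ↦ Complex.exp (-((x * y : ℝ) : ℂ)) * (polylog r (Real.exp (-y)) : ℂ)
  have hp (n : ℕ+) : 0 < x + n := by positivity
  have hF : ∀ y ∈ Set.Ioi 0,
      HasSum (fun n : ℕ+ ↦ 1 / (n : ℂ) ^ r * rexp (-(x + n) * y)) (F y) :=
    fun y hy ↦ hasSum_exp_neg_mul_polylog r x hy
  have hsum_norm := summable_one_div_pow_mul_rpow hr hx.le ht
  have hterm (n : ℕ+) :
      ‖1 / ((n : ℂ) ^ r * ((x : ℂ) + (n : ℂ)) ^ t)‖ = 1 / ((n : ℝ) ^ r * (x + n) ^ t.re) := by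
    rw [norm_div, norm_one, norm_mul, norm_pow, Complex.norm_natCast, ← Complex.ofReal_natCast,
      ← Complex.ofReal_add, Complex.norm_cpow_eq_rpow_re_of_pos (hp n)]
  have h_sum : Summable fun n : ℕ+ ↦ ‖1 / (n : ℂ) ^ r‖ / (x + n) ^ t.re := by
    refine hsum_norm.congr fun n ↦ ?_
    rw [norm_div, norm_one, norm_pow, Complex.norm_natCast, div_div]
  have hsumC : Summable fun n : ℕ+ ↦ 1 / ((n : ℂ) ^ r * ((x : ℂ) + (n : ℂ)) ^ t) :=
    .of_norm (hsum_norm.congr fun n ↦ (hterm n).symm)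
  refine ⟨?_, ?_, hsumC⟩
  · calc _ = mellin F t := by simp only [mellin, smul_eq_mul, F, mul_assoc]
      _ = ∑' n : ℕ+, Complex.Gamma t * (1 / (n : ℂ) ^ r) / ((x + n : ℝ) : ℂ) ^ t :=
        (hasSum_mellin (fun n ↦ .inr (hp n)) ht hF h_sum).tsum_eq.symm
      _ = _ := by
        rw [← tsum_mul_left]
        refine tsum_congr fun n ↦ ?_
        push_cast
        ring
  · simpa only [MellinConvergent, smul_eq_mul, mul_assoc] using
      mellinConvergent_of_hasSum hp ht hF h_sum
end

section
/- Let r ≥ 2 be an integer, let x > 0, and let t be real with t > 1−r. Then Σ_{ℓ=1}^{r−1} binom(r,ℓ) x^ℓ Θ(ℓ, r−ℓ, t+r, x) = (1 + (−1)^r) x^{r−1} Θ(r−1, 1, t+r, x) + Σ_{ℓ=1}^{r−2} ( (−1)^{ℓ+1} + binom(r−1,ℓ) ) x^ℓ Θ(ℓ+1, r−ℓ, t+r−1, x). -/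
open Real Filter Topology Finset

/-!
At `A = n`, `B = m x`, the polynomial identity
`∑ C(r,ℓ) B^ℓ A^(r-ℓ) = (1 + (-1)^r) A B^(r-1) + ∑ ((-1)^(ℓ+1) + C(r-1,ℓ)) B^ℓ A^(r-1-ℓ) (A + B)`,
divided by `n^r m^r (n + m x)^(t+r)`, is the claimed identity between the `(n, m)` terms of the
series. The polynomial identity itself is the binomial theorem for `(A + B)^r` and
`(A + B)^(r-1)`, together with a telescoping alternating sum. Every series involved converges
absolutely, so summing the termwise identity over `(n, m)` gives the theorem.
-/

section BinomialIdentity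

variable {R : Type*} [CommRing R]

theorem sum_Icc_choose_mul_pow (n : ℕ) (A B : R) :
    ∑ ℓ ∈ Icc 1 n, ((n + 1).choose ℓ : R) * B ^ ℓ * A ^ (n + 1 - ℓ)
      = (A + B) ^ (n + 1) - A ^ (n + 1) - B ^ (n + 1) := by
  rw [add_comm A, add_pow, sum_range_succ, sum_range_eq_add_Ico _ (by omega),
    Ico_add_one_right_eq_Icc]
  simp only [pow_zero, Nat.sub_zero, Nat.choose_zero_right, Nat.cast_one, mul_one, one_mul,
    Nat.sub_self, Nat.choose_self]
  rw [sum_congr rfl fun ℓ _ => mul_rotate (((n + 1).choose ℓ : ℕ) : R) (B ^ ℓ) (A ^ (n + 1 - ℓ))]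
  ring

theorem sum_Icc_neg_one_pow_mul_pow_mul_add (k : ℕ) (A B : R) :
    ∑ ℓ ∈ Icc 1 k, (-1 : R) ^ (ℓ + 1) * B ^ ℓ * A ^ (k + 1 - ℓ) * (A + B)
      = B * A ^ (k + 1) - (-1) ^ k * B ^ (k + 1) * A := by
  set f : ℕ → R := fun ℓ => (-1) ^ ℓ * B ^ ℓ * A ^ (k + 2 - ℓ)
  have hterm : ∀ ℓ ∈ Icc 1 k,
      (-1 : R) ^ (ℓ + 1) * B ^ ℓ * A ^ (k + 1 - ℓ) * (A + B) = f (ℓ + 1) - f ℓ := by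
    intro ℓ hℓ
    have hℓk := (mem_Icc.1 hℓ).2
    simp only [f, show k + 2 - ℓ = k + 1 - ℓ + 1 by omega,
      show k + 2 - (ℓ + 1) = k + 1 - ℓ by omega]
    ring
  rw [sum_congr rfl hterm, ← Ico_add_one_right_eq_Icc, sum_Ico_sub f (by omega : 1 ≤ k + 1)]
  simp only [f, show k + 2 - (k + 1) = 1 by omega, show k + 2 - 1 = k + 1 by omega]
  ring

theorem sum_Icc_choose_mul_pow_eq {r : ℕ} (hr : 2 ≤ r) (A B : R) :
    ∑ ℓ ∈ Icc 1 (r - 1), (r.choose ℓ : R) * B ^ ℓ * A ^ (r - ℓ)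
      = (1 + (-1) ^ r) * A * B ^ (r - 1)
        + ∑ ℓ ∈ Icc 1 (r - 2),
            ((-1) ^ (ℓ + 1) + ((r - 1).choose ℓ : R)) * B ^ ℓ * A ^ (r - 1 - ℓ) * (A + B) := by
  obtain ⟨k, rfl⟩ : ∃ k, r = k + 1 + 1 := ⟨r - 2, by omega⟩
  have hsplit : ∑ ℓ ∈ Icc 1 k,
        ((-1) ^ (ℓ + 1) + ((k + 1).choose ℓ : R)) * B ^ ℓ * A ^ (k + 1 - ℓ) * (A + B)
      = ∑ ℓ ∈ Icc 1 k, (-1 : R) ^ (ℓ + 1) * B ^ ℓ * A ^ (k + 1 - ℓ) * (A + B)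
        + (∑ ℓ ∈ Icc 1 k, ((k + 1).choose ℓ : R) * B ^ ℓ * A ^ (k + 1 - ℓ)) * (A + B) := by
    rw [sum_mul, ← sum_add_distrib]
    exact sum_congr rfl fun ℓ _ => by ring
  rw [show k + 1 + 1 - 1 = k + 1 from rfl, show k + 1 + 1 - 2 = k from rfl, hsplit,
    sum_Icc_neg_one_pow_mul_pow_mul_add, sum_Icc_choose_mul_pow, sum_Icc_choose_mul_pow]
  ring

end BinomialIdentity

section ThetaTerm

variable {a b c x : ℝ}

/-- Since `n ^ (c / 2) * (m x) ^ (c / 2) ≤ (n + m x) ^ c`, the series is dominated by a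
product of two `p`-series. -/
theorem summable_thetaTerm_s15 (hx : 0 < x) (hc : 0 ≤ c) (ha : 1 < a + c / 2) (hb : 1 < b + c / 2) :
    Summable (thetaTerm a b c x) := by
  have hpSeries : ∀ {p : ℝ}, 1 < p → Summable fun n : ℕ+ => ((n : ℝ) ^ p)⁻¹ := fun hp =>
    (summable_nat_rpow_inv.2 hp).comp_injective PNat.coe_injective
  have hprod : Summable fun q : ℕ+ × ℕ+ =>
      ((q.1 : ℝ) ^ (a + c / 2))⁻¹ * ((q.2 : ℝ) ^ (b + c / 2))⁻¹ * (x ^ (c / 2))⁻¹ :=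
    ((hpSeries ha).mul_of_nonneg (hpSeries hb) (fun _ => by positivity)
      (fun _ => by positivity)).mul_right _
  refine hprod.of_nonneg_of_le (fun _ => by unfold thetaTerm; positivity) fun ⟨n, m⟩ => ?_
  have hn : (0 : ℝ) < n := by positivity
  have hm : (0 : ℝ) < m := by positivity
  rw [← mul_inv, ← mul_inv, thetaTerm, one_div]
  refine inv_anti₀ (by positivity) ?_
  calc (n : ℝ) ^ (a + c / 2) * (m : ℝ) ^ (b + c / 2) * x ^ (c / 2)
      = (n : ℝ) ^ a * (m : ℝ) ^ b * ((n : ℝ) ^ (c / 2) * ((m : ℝ) * x) ^ (c / 2)) := by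
        rw [rpow_add hn, rpow_add hm, mul_rpow hm.le hx.le]; ring
    _ ≤ (n : ℝ) ^ a * (m : ℝ) ^ b *
          (((n : ℝ) + m * x) ^ (c / 2) * ((n : ℝ) + m * x) ^ (c / 2)) := by
        gcongr
        · linarith [mul_pos hm hx]
        · linarith
    _ = (n : ℝ) ^ a * (m : ℝ) ^ b * ((n : ℝ) + m * x) ^ c := by
        rw [← rpow_add (by positivity), add_halves]

theorem hasSum_thetaTerm (h : Summable (thetaTerm a b c x)) :
    HasSum (thetaTerm a b c x) (Theta a b c x) := by
  have := h.hasSum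
  rwa [h.tsum_prod' h.prod_factor] at this

theorem pow_mul_thetaTerm_mul (hx : 0 ≤ x) {i j r : ℕ} (ha : a + j = r) (hb : b + i = r)
    (n m : ℕ+) :
    x ^ i * thetaTerm a b c x (n, m) * ((n : ℝ) ^ r * (m : ℝ) ^ r * ((n : ℝ) + m * x) ^ c)
      = ((m : ℝ) * x) ^ i * (n : ℝ) ^ j := by
  obtain rfl : a = r - j := eq_sub_of_add_eq ha
  obtain rfl : b = r - i := eq_sub_of_add_eq hb
  have hn : (0 : ℝ) < n := by positivity
  have hm : (0 : ℝ) < m := by positivity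
  have hQ : (0 : ℝ) < ((n : ℝ) + m * x) ^ c := by positivity
  simp only [thetaTerm, rpow_sub hn, rpow_sub hm, rpow_natCast]
  field_simp
  ring

end ThetaTerm

theorem sum_choose_pow_mul_thetaTerm {r : ℕ} (hr : 2 ≤ r) {x : ℝ} (hx : 0 ≤ x) (s : ℝ)
    (p : ℕ+ × ℕ+) :
    ∑ ℓ ∈ Icc 1 (r - 1), (r.choose ℓ : ℝ) * x ^ ℓ * thetaTerm ℓ ((r : ℝ) - ℓ) s x p
      = (1 + (-1 : ℝ) ^ r) * x ^ (r - 1) * thetaTerm ((r : ℝ) - 1) 1 s x p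
        + ∑ ℓ ∈ Icc 1 (r - 2), ((-1 : ℝ) ^ (ℓ + 1) + ((r - 1).choose ℓ : ℝ)) * x ^ ℓ *
            thetaTerm ((ℓ : ℝ) + 1) ((r : ℝ) - ℓ) (s - 1) x p := by
  obtain ⟨n, m⟩ := p
  set A : ℝ := (n : ℝ)
  set B : ℝ := (m : ℝ) * x
  have hQ : 0 < A + B := by positivity
  have hW : A ^ r * (m : ℝ) ^ r * (A + B) ^ s ≠ 0 := by positivity
  have hQs : (A + B) ^ s = (A + B) ^ (s - 1) * (A + B) := by
    rw [← rpow_add_one hQ.ne', sub_add_cancel]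
  have hL : ∀ ℓ ∈ Icc 1 (r - 1),
      (r.choose ℓ : ℝ) * x ^ ℓ * thetaTerm ℓ ((r : ℝ) - ℓ) s x (n, m)
        * (A ^ r * (m : ℝ) ^ r * (A + B) ^ s)
        = (r.choose ℓ : ℝ) * B ^ ℓ * A ^ (r - ℓ) := by
    intro ℓ hℓ
    have hℓr : ℓ ≤ r := by grind
    linear_combination (r.choose ℓ : ℝ) *
      pow_mul_thetaTerm_mul (a := ℓ) (b := r - ℓ) (c := s) (i := ℓ) (j := r - ℓ) (r := r) hx
        (by norm_cast; omega) (by ring) n m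
  have hTail : (1 + (-1 : ℝ) ^ r) * x ^ (r - 1) * thetaTerm ((r : ℝ) - 1) 1 s x (n, m)
      * (A ^ r * (m : ℝ) ^ r * (A + B) ^ s) = (1 + (-1) ^ r) * A * B ^ (r - 1) := by
    linear_combination (1 + (-1 : ℝ) ^ r) *
      pow_mul_thetaTerm_mul (a := r - 1) (b := 1) (c := s) (i := r - 1) (j := 1) (r := r) hx
        (by push_cast; ring) (by norm_cast; omega) n m
  have hR : ∀ ℓ ∈ Icc 1 (r - 2), ((-1 : ℝ) ^ (ℓ + 1) + ((r - 1).choose ℓ : ℝ)) * x ^ ℓ *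
      thetaTerm ((ℓ : ℝ) + 1) ((r : ℝ) - ℓ) (s - 1) x (n, m)
        * (A ^ r * (m : ℝ) ^ r * (A + B) ^ s)
      = ((-1) ^ (ℓ + 1) + ((r - 1).choose ℓ : ℝ)) * B ^ ℓ * A ^ (r - 1 - ℓ) * (A + B) := by
    intro ℓ hℓ
    have hℓr : ℓ + 1 ≤ r := by grind
    rw [hQs]
    linear_combination ((-1 : ℝ) ^ (ℓ + 1) + ((r - 1).choose ℓ : ℝ)) * (A + B) *
      pow_mul_thetaTerm_mul (a := ℓ + 1) (b := r - ℓ) (c := s - 1)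
        (i := ℓ) (j := r - 1 - ℓ) (r := r) hx (by norm_cast; omega) (by ring) n m
  rw [← mul_left_inj' hW, add_mul, sum_mul, sum_mul, sum_congr rfl hL, hTail, sum_congr rfl hR]
  exact sum_Icc_choose_mul_pow_eq hr A B

theorem stmt15 (r : ℕ) (hr : 2 ≤ r) (x : ℝ) (hx : 0 < x) (t : ℝ) (ht : 1 - (r : ℝ) < t) :
    (∑ ℓ ∈ Finset.Icc 1 (r - 1),
        (r.choose ℓ : ℝ) * x ^ ℓ * Theta ℓ ((r : ℝ) - ℓ) (t + r) x)
      = (1 + (-1 : ℝ) ^ r) * x ^ (r - 1) * Theta ((r : ℝ) - 1) 1 (t + r) x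
        + ∑ ℓ ∈ Finset.Icc 1 (r - 2),
            ((-1 : ℝ) ^ (ℓ + 1) + ((r - 1).choose ℓ : ℝ)) * x ^ ℓ *
              Theta ((ℓ : ℝ) + 1) ((r : ℝ) - ℓ) (t + r - 1) x := by
  have hasSum_of_one_le {a b c : ℝ} (ha : 1 ≤ a) (hb : 1 ≤ b) (hc : 0 < c) :
      HasSum (thetaTerm a b c x) (Theta a b c x) :=
    hasSum_thetaTerm (summable_thetaTerm_s15 hx hc.le (by linarith) (by linarith))
  have hr' : (2 : ℝ) ≤ r := by exact_mod_cast hr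
  have hL := hasSum_sum fun ℓ (hℓ : ℓ ∈ Icc 1 (r - 1)) =>
    (hasSum_of_one_le (a := ℓ) (b := r - ℓ) (c := t + r)
      (by exact_mod_cast (mem_Icc.1 hℓ).1)
      (by rw [le_sub_iff_add_le]; exact_mod_cast (by grind : 1 + ℓ ≤ r))
      (by linarith)).mul_left ((r.choose ℓ : ℝ) * x ^ ℓ)
  have hR := ((hasSum_of_one_le (a := r - 1) (b := 1) (c := t + r) (by linarith) le_rfl
      (by linarith)).mul_left ((1 + (-1 : ℝ) ^ r) * x ^ (r - 1))).add
    (hasSum_sum fun ℓ (hℓ : ℓ ∈ Icc 1 (r - 2)) =>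
      (hasSum_of_one_le (a := ℓ + 1) (b := r - ℓ) (c := t + r - 1)
        (by simp)
        (by rw [le_sub_iff_add_le]; exact_mod_cast (by grind : 1 + ℓ ≤ r))
        (by linarith)).mul_left (((-1 : ℝ) ^ (ℓ + 1) + ((r - 1).choose ℓ : ℝ)) * x ^ ℓ))
  rw [funext (sum_choose_pow_mul_thetaTerm hr hx.le (t + r))] at hL
  exact hL.unique hR
end

section
/- Let r ≥ 2 be an integer and let x > 0. Then F_r(x) + (−x)^{r−1} F_r(1/x) = ζ(r+1)((−x)^r − 1/x) − γζ(r) − Σ_{ℓ=2}^{r−1} ζ(ℓ) ζ(r−ℓ+1) (−x)^{ℓ−1} − γζ(r)(−x)^{r−1}. -/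
open Real Filter Topology Finset

noncomputable def higherF (r : ℕ) (x : ℝ) : ℝ := ∑' n : ℕ+, psi ((n : ℝ) * x) / (n : ℝ) ^ r

/-!
Differentiating the Bohr–Mollerup limit for `log Γ` gives
`ψ(y) = -γ - 1/y + Σ_{k ≥ 1} y/(k(k+y))`, hence `F_r(x) = -γ ζ(r) - ζ(r+1)/x + T_r(x)` with
`T_r(x) = Σ_{n,k ≥ 1} x/(n^(r-1) k (k + n x))`. Expanding `1/(k(k + n x))` in powers of `-n x/k`
up to order `r - 3` splits each term of `T_r(x)` into the products `-(-x)^(ℓ-1) n^(ℓ-r-1) k^(-ℓ)`,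
`2 ≤ ℓ ≤ r - 1`, plus a remainder which, after swapping `n` and `k`, is `-(-x)^(r-1)` times the
corresponding term of `T_r(1/x)`. All double series converge absolutely since
`k + n x ≥ √(k n x)`, so summing gives
`T_r(x) + (-x)^(r-1) T_r(1/x) = -Σ_ℓ ζ(ℓ) ζ(r-ℓ+1) (-x)^(ℓ-1)`.
-/

local notation "γ" => Real.eulerMascheroniConstant

lemma summable_one_div_succ_pow {k : ℕ} (hk : 2 ≤ k) :
    Summable fun n : ℕ => 1 / ((n : ℝ) + 1) ^ k := by
  exact_mod_cast (summable_nat_add_iff 1).2 (Real.summable_one_div_nat_pow.2 hk)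

section Digamma

open Real.BohrMollerup

lemma hasDerivAt_logGammaSeq (n : ℕ) {y : ℝ} (hy : 0 < y) :
    HasDerivAt (logGammaSeq · n) (log n - ∑ m ∈ range (n + 1), 1 / (y + m)) y := by
  have hsum : HasDerivAt (fun x : ℝ => ∑ m ∈ range (n + 1), log (x + m))
      (∑ m ∈ range (n + 1), 1 / (y + m)) y :=
    HasDerivAt.fun_sum fun m _ => by
      simpa using ((hasDerivAt_id y).add_const (m : ℝ)).log (by positivity)
  unfold logGammaSeq
  simpa using
    (((hasDerivAt_id y).mul_const (log n)).add_const (log (Nat.factorial n))).fun_sub hsum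

lemma log_sub_sum_one_div_add_eq (n : ℕ) {y : ℝ} (hy : 0 < y) :
    log n - ∑ m ∈ range (n + 1), 1 / (y + m) =
      -(harmonic n - log n) - 1 / y + ∑ k ∈ range n, y / ((k + 1) * (y + (k + 1))) := by
  have hterm : ∀ k ∈ range n,
      y / (((k : ℝ) + 1) * (y + (k + 1))) = 1 / ((k : ℝ) + 1) - 1 / (y + (k + 1)) := by
    intro k _
    field_simp
    ring
  rw [sum_congr rfl hterm, sum_sub_distrib, sum_range_succ', harmonic]
  push_cast
  simp only [one_div, add_zero]
  ring

lemma tendstoUniformlyOn_sum_div_mul_add (b : ℝ) :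
    TendstoUniformlyOn (fun n (y : ℝ) => ∑ k ∈ range n, y / ((k + 1) * (y + (k + 1))))
      (fun (y : ℝ) => ∑' k : ℕ, y / ((k + 1) * (y + (k + 1)))) atTop (Set.Ioc 0 b) := by
  refine tendstoUniformlyOn_tsum_nat ((summable_one_div_succ_pow le_rfl).mul_left b)
    fun k y ⟨hy, hyb⟩ => ?_
  rw [Real.norm_of_nonneg (by positivity), mul_one_div, sq]
  exact div_le_div₀ (hy.le.trans hyb) hyb (by positivity)
    (mul_le_mul_of_nonneg_left (by linarith) (by positivity))

lemma hasDerivAt_log_Gamma {y : ℝ} (hy : 0 < y) :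
    HasDerivAt (fun x => log (Gamma x))
      (-γ - 1 / y + ∑' k : ℕ, y / ((k + 1) * (y + (k + 1)))) y := by
  refine hasDerivAt_of_tendstoLocallyUniformlyOn isOpen_Ioi (l := atTop)
    (f := fun n x => logGammaSeq x n)
    (g' := fun y => -γ - 1 / y + ∑' k : ℕ, y / ((k + 1) * (y + (k + 1))))
    (f' := fun n (y : ℝ) =>
      -(harmonic n - log n) - 1 / y + ∑ k ∈ range n, y / ((k + 1) * (y + (k + 1))))
    ?_ (Eventually.of_forall fun n x hx => ?_) (fun x hx => tendsto_log_gamma hx) hy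
  · rw [tendstoLocallyUniformlyOn_iff_forall_isCompact isOpen_Ioi]
    intro K hKpos hK
    obtain ⟨b, hb⟩ := hK.bddAbove
    have hconst := tendsto_harmonic_sub_log.neg.tendstoUniformlyOn_const K
    have hinv : TendstoUniformlyOn (fun (_ : ℕ) (y : ℝ) => 1 / y) (fun y => 1 / y) atTop K :=
      tendstoUniformlyOn_iff_tendsto.2 (tendsto_diag_uniformity _ _)
    exact (hconst.sub hinv).add
      ((tendstoUniformlyOn_sum_div_mul_add b).mono fun y hy => ⟨hKpos hy, hb hy⟩)
  · rw [← log_sub_sum_one_div_add_eq n hx]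
    exact hasDerivAt_logGammaSeq n hx

lemma psi_eq_tsum {y : ℝ} (hy : 0 < y) :
    psi y = -γ - 1 / y + ∑' k : ℕ, y / ((k + 1) * (y + (k + 1))) := by
  have hGamma : DifferentiableAt ℝ Gamma y :=
    differentiableAt_Gamma fun m => by linarith [(Nat.cast_nonneg m : (0 : ℝ) ≤ m)]
  exact (hGamma.hasDerivAt.log (Gamma_pos_of_pos hy).ne').unique (hasDerivAt_log_Gamma hy)

end Digamma

lemma summable_one_div_succ_mul_sqrt :
    Summable fun n : ℕ => 1 / (((n : ℝ) + 1) * √((n : ℝ) + 1)) := by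
  have h : Summable fun n : ℕ => 1 / ((n + 1 : ℕ) : ℝ) ^ (3 / 2 : ℝ) :=
    (summable_nat_add_iff 1).2 (Real.summable_one_div_nat_rpow.2 (by norm_num))
  refine h.congr fun n => ?_
  rw [Real.sqrt_eq_rpow, ← Real.rpow_one_add' (by positivity) (by norm_num)]
  norm_num

lemma zetaR_natCast (k : ℕ) : zetaR k = ∑' n : ℕ, 1 / ((n : ℝ) + 1) ^ k := by
  rw [zetaR, tsum_pnat_eq_tsum_succ (f := fun n : ℕ => 1 / (n : ℝ) ^ (k : ℝ))]
  simp

lemma tsum_one_div_pow_mul_one_div_pow {a b : ℕ} (ha : 2 ≤ a) (hb : 2 ≤ b) :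
    ∑' p : ℕ × ℕ, 1 / ((p.1 : ℝ) + 1) ^ a * (1 / ((p.2 : ℝ) + 1) ^ b) = zetaR a * zetaR b := by
  rw [zetaR_natCast, zetaR_natCast, tsum_mul_tsum_of_summable_norm]
  · exact (summable_one_div_succ_pow ha).norm
  · exact (summable_one_div_succ_pow hb).norm

/-- The term `n x / (n ^ r k (k + n x))` of `Σ_n n⁻ʳ Σ_k n x / (k (k + n x))`,
at `p = (n - 1, k - 1)`. -/
noncomputable def herglotzTerm (r : ℕ) (x : ℝ) (p : ℕ × ℕ) : ℝ :=
  x / (((p.1 : ℝ) + 1) ^ (r - 1) * (((p.2 : ℝ) + 1) * ((p.2 + 1) + (p.1 + 1) * x)))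

lemma herglotzTerm_nonneg (r : ℕ) {x : ℝ} (hx : 0 ≤ x) (p : ℕ × ℕ) :
    0 ≤ herglotzTerm r x p := by
  unfold herglotzTerm
  positivity

lemma herglotzTerm_le_herglotzTerm_two {r : ℕ} (hr : 2 ≤ r) {x : ℝ} (hx : 0 ≤ x) (p : ℕ × ℕ) :
    herglotzTerm r x p ≤ herglotzTerm 2 x p := by
  unfold herglotzTerm
  gcongr
  linarith [(Nat.cast_nonneg p.1 : (0 : ℝ) ≤ p.1)]

lemma sqrt_mul_sqrt_mul_sqrt_le_add {a b x : ℝ} (ha : 0 ≤ a) (hb : 0 ≤ b) (hx : 0 ≤ x) :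
    √a * √b * √x ≤ b + a * x := by
  nlinarith [sq_nonneg (√b - √a * √x), Real.sq_sqrt ha, Real.sq_sqrt hb, Real.sq_sqrt hx,
    mul_nonneg (mul_nonneg (Real.sqrt_nonneg a) (Real.sqrt_nonneg b)) (Real.sqrt_nonneg x)]

lemma herglotzTerm_two_le {x : ℝ} (hx : 0 < x) (p : ℕ × ℕ) :
    herglotzTerm 2 x p ≤ √x * (1 / (((p.1 : ℝ) + 1) * √((p.1 : ℝ) + 1)) *
      (1 / (((p.2 : ℝ) + 1) * √((p.2 : ℝ) + 1)))) := by
  set N : ℝ := (p.1 : ℝ) + 1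
  set K : ℝ := (p.2 : ℝ) + 1
  have hN : 0 < N := by positivity
  have hK : 0 < K := by positivity
  calc herglotzTerm 2 x p = x / (N * (K * (K + N * x))) := by simp [herglotzTerm, N, K]
    _ ≤ x / (N * (K * (√N * √K * √x))) := by
      gcongr
      exact sqrt_mul_sqrt_mul_sqrt_le_add hN.le hK.le hx.le
    _ = _ := by
      field_simp
      rw [Real.sq_sqrt hx.le]

lemma summable_herglotzTerm {r : ℕ} (hr : 2 ≤ r) {x : ℝ} (hx : 0 < x) :
    Summable (herglotzTerm r x) :=
  .of_nonneg_of_le (herglotzTerm_nonneg r hx.le)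
    (fun p => (herglotzTerm_le_herglotzTerm_two hr hx.le p).trans (herglotzTerm_two_le hx p))
    ((summable_one_div_succ_mul_sqrt.mul_of_nonneg summable_one_div_succ_mul_sqrt
      (fun _ => by positivity) (fun _ => by positivity)).mul_left √x)

lemma one_div_mul_add_eq_sum_add (N : ℕ) {a b : ℝ} (ha : a ≠ 0) (hab : a + b ≠ 0) :
    1 / (a * (a + b)) =
      ∑ j ∈ range N, (-b) ^ j / a ^ (j + 2) + (-b) ^ N / (a ^ (N + 1) * (a + b)) := by
  induction N with
  | zero => simp
  | succ N ih =>
    rw [ih, sum_range_succ]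
    field_simp
    ring

lemma herglotzTerm_add_swap {r : ℕ} (hr : 2 ≤ r) {x : ℝ} (hx : 0 < x) (p : ℕ × ℕ) :
    herglotzTerm r x p + (-x) ^ (r - 1) * herglotzTerm r x⁻¹ p.swap =
      -∑ j ∈ range (r - 2), (-x) ^ (j + 1) *
        (1 / ((p.1 : ℝ) + 1) ^ (r - 1 - j) * (1 / ((p.2 : ℝ) + 1) ^ (j + 2))) := by
  obtain ⟨m, rfl⟩ : ∃ m, r = m + 2 := ⟨r - 2, by omega⟩
  rw [show m + 2 - 1 = m + 1 by omega, Nat.add_sub_cancel]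
  set N : ℝ := (p.1 : ℝ) + 1
  set K : ℝ := (p.2 : ℝ) + 1
  have hN : 0 < N := by positivity
  have hK : 0 < K := by positivity
  have hsplit : herglotzTerm (m + 2) x p = x / N ^ (m + 1) * (1 / (K * (K + N * x))) := by
    simp only [herglotzTerm, N, K, show m + 2 - 1 = m + 1 by omega]
    field_simp
  have hterm : ∀ j ∈ range m, x / N ^ (m + 1) * ((-(N * x)) ^ j / K ^ (j + 2)) =
      -((-x) ^ (j + 1) * (1 / N ^ (m + 1 - j) * (1 / K ^ (j + 2)))) := by
    intro j hj
    have hpow : N ^ (m + 1) = N ^ j * N ^ (m + 1 - j) := by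
      rw [← pow_add, Nat.add_sub_cancel' (by rw [mem_range] at hj; omega)]
    rw [hpow, neg_pow, neg_pow x, mul_pow]
    field_simp
    ring
  have hrem : x / N ^ (m + 1) * ((-(N * x)) ^ m / (K ^ (m + 1) * (K + N * x))) +
      (-x) ^ (m + 1) * herglotzTerm (m + 2) x⁻¹ p.swap = 0 := by
    simp only [herglotzTerm, Prod.fst_swap, Prod.snd_swap, show m + 2 - 1 = m + 1 by omega]
    rw [neg_pow, neg_pow x, mul_pow, pow_succ, pow_succ (-1 : ℝ)]
    field_simp
    ring
  rw [hsplit, one_div_mul_add_eq_sum_add m hK.ne' (by positivity), mul_add, mul_sum,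
    sum_congr rfl hterm, sum_neg_distrib, add_assoc, hrem, add_zero]

lemma sum_range_eq_sum_Icc {r : ℕ} (hr : 2 ≤ r) (x : ℝ) :
    ∑ j ∈ range (r - 2), (-x) ^ (j + 1) * (zetaR (r - 1 - j : ℕ) * zetaR (j + 2 : ℕ)) =
      ∑ ℓ ∈ Icc 2 (r - 1), zetaR ℓ * zetaR ((r : ℝ) - ℓ + 1) * (-x) ^ (ℓ - 1) := by
  obtain ⟨m, rfl⟩ : ∃ m, r = m + 2 := ⟨r - 2, by omega⟩
  rw [show m + 2 - 1 = m + 1 by omega, ← Ico_add_one_right_eq_Icc, sum_Ico_eq_sum_range,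
    show m + 1 + 1 - 2 = m by omega]
  refine sum_congr rfl fun j hj => ?_
  have hj : j ≤ m + 1 := by rw [mem_range] at hj; omega
  rw [show 2 + j - 1 = j + 1 by omega, add_comm 2 j, Nat.cast_sub hj]
  push_cast
  ring_nf

lemma tsum_herglotzTerm_add {r : ℕ} (hr : 2 ≤ r) {x : ℝ} (hx : 0 < x) :
    ∑' p, herglotzTerm r x p + (-x) ^ (r - 1) * ∑' p, herglotzTerm r x⁻¹ p =
      -∑ ℓ ∈ Icc 2 (r - 1), zetaR ℓ * zetaR ((r : ℝ) - ℓ + 1) * (-x) ^ (ℓ - 1) := by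
  have hswap : Summable fun p : ℕ × ℕ => (-x) ^ (r - 1) * herglotzTerm r x⁻¹ p.swap :=
    ((summable_herglotzTerm hr (inv_pos.2 hx)).comp_injective Prod.swap_injective).mul_left _
  have hpow : ∀ j ∈ range (r - 2), 2 ≤ r - 1 - j := fun j hj => by rw [mem_range] at hj; omega
  have hterm : ∀ j ∈ range (r - 2), Summable fun p : ℕ × ℕ => (-x) ^ (j + 1) *
      (1 / ((p.1 : ℝ) + 1) ^ (r - 1 - j) * (1 / ((p.2 : ℝ) + 1) ^ (j + 2))) := fun j hj =>
    ((summable_one_div_succ_pow (hpow j hj)).mul_of_nonneg (summable_one_div_succ_pow le_add_self)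
      (fun _ => by positivity) (fun _ => by positivity)).mul_left _
  rw [← (Equiv.prodComm ℕ ℕ).tsum_eq (herglotzTerm r x⁻¹), ← tsum_mul_left]
  simp only [Equiv.prodComm_apply]
  rw [← (summable_herglotzTerm hr hx).tsum_add hswap, tsum_congr (herglotzTerm_add_swap hr hx),
    tsum_neg, Summable.tsum_finsetSum hterm, ← sum_range_eq_sum_Icc hr]
  refine congrArg _ (sum_congr rfl fun j hj => ?_)
  rw [tsum_mul_left, tsum_one_div_pow_mul_one_div_pow (hpow j hj) le_add_self]

lemma psi_div_pow_eq {r : ℕ} (hr : 1 ≤ r) {x : ℝ} (hx : 0 < x) (n : ℕ) :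
    psi (((n : ℝ) + 1) * x) / ((n : ℝ) + 1) ^ r =
      -γ * (1 / ((n : ℝ) + 1) ^ r) - x⁻¹ * (1 / ((n : ℝ) + 1) ^ (r + 1)) +
        ∑' k, herglotzTerm r x (n, k) := by
  have hpow : ((n : ℝ) + 1) ^ r = ((n : ℝ) + 1) ^ (r - 1) * (n + 1) := by
    rw [← pow_succ, Nat.sub_add_cancel hr]
  rw [psi_eq_tsum (by positivity), add_div, sub_div, ← tsum_div_const]
  congr 1
  · rw [pow_succ]
    field_simp
  · refine tsum_congr fun k => ?_
    rw [herglotzTerm, hpow]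
    field_simp
    ring

lemma higherF_eq {r : ℕ} (hr : 2 ≤ r) {x : ℝ} (hx : 0 < x) :
    higherF r x = -γ * zetaR r - zetaR (r + 1) * x⁻¹ + ∑' p, herglotzTerm r x p := by
  have hζ : Summable fun n : ℕ => -γ * (1 / ((n : ℝ) + 1) ^ r) :=
    (summable_one_div_succ_pow hr).mul_left _
  have hζ' : Summable fun n : ℕ => x⁻¹ * (1 / ((n : ℝ) + 1) ^ (r + 1)) :=
    (summable_one_div_succ_pow (by omega)).mul_left _
  have hT := summable_herglotzTerm hr hx
  rw [higherF, tsum_pnat_eq_tsum_succ (f := fun n : ℕ => psi (n * x) / (n : ℝ) ^ r)]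
  push_cast
  rw [tsum_congr (psi_div_pow_eq (by omega) hx), (hζ.sub hζ').tsum_add hT.prod, hζ.tsum_sub hζ',
    tsum_mul_left, tsum_mul_left, ← hT.tsum_prod, zetaR_natCast, ← Nat.cast_add_one,
    zetaR_natCast]
  ring

theorem stmt18 (r : ℕ) (hr : 2 ≤ r) (x : ℝ) (hx : 0 < x) :
    higherF r x + (-x) ^ (r - 1) * higherF r (1 / x) =
      zetaR (r + 1) * ((-x) ^ r - 1 / x)
        - Real.eulerMascheroniConstant * zetaR r
        - (∑ ℓ ∈ Finset.Icc 2 (r - 1), zetaR ℓ * zetaR ((r : ℝ) - ℓ + 1) * (-x) ^ (ℓ - 1))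
        - Real.eulerMascheroniConstant * zetaR r * (-x) ^ (r - 1) := by
  have hpow : (-x) ^ r = (-x) ^ (r - 1) * -x := by rw [← pow_succ, Nat.sub_add_cancel (by omega)]
  rw [higherF_eq hr hx, one_div, higherF_eq hr (inv_pos.2 hx), inv_inv, hpow]
  linear_combination tsum_herglotzTerm_add hr hx
end

section
/- For every x > 0, F(x) + F(1/x) = 2F(1) + (1/2) log²(x) − (π²/(6x))(x−1)². -/
open Real Filter Topology Finset

noncomputable def HerglotzF (x : ℝ) : ℝ :=
  ∑' n : ℕ+, (psi ((n : ℝ) * x) - Real.log ((n : ℝ) * x)) / (n : ℝ)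

/-!
Write `h = ψ - log`. Log-convexity of `Γ` traps `ψ (t + 1)` between `log t` and `log (t + 1)`, so
`h (y + n) → 0`; since `h (u + 1) - h u = 1/u - log (1 + 1/u) ≥ 0`, this makes `h` the sum of a
series that can be differentiated termwise: `h' y = ∑_{m ≥ 0} (y + m)⁻² - y⁻¹`, and
`F' x = ∑_{n ≥ 1} h' (n x)`. In `F' x - x⁻² F' (1/x)` the `y⁻¹` terms cancel, leaving
`∑_n (∑_m (n x + m)⁻² - ∑_m (n + m x)⁻²)`. Cut at `n ≤ N`, `1 ≤ m ≤ N` the two square blocks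
coincide; the `m = 0` terms give `π²/6 · (x⁻² - 1)`, and each tail
`∑_{n ≤ N} ∑_{m > N} (α n + β m)⁻²` is squeezed between Riemann sums tending to
`log ((α + β)/β) / (α β)`; for `(α, β) = (x, 1)` and `(1, x)` their difference is `log x / x`.
Hence both sides of the functional equation have the same derivative on `(0, ∞)`, and they agree
at `x = 1`.
-/

namespace Herglotz

noncomputable section

lemma div_add_le_log_add_sub_log {a d : ℝ} (ha : 0 < a) (hd : 0 ≤ d) :
    d / (a + d) ≤ log (a + d) - log a := by
  have h := one_sub_inv_le_log_of_pos (x := (a + d) / a) (by positivity)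
  rw [log_div (by positivity) ha.ne', inv_div] at h
  calc d / (a + d) = 1 - a / (a + d) := by field_simp; ring
    _ ≤ _ := h

lemma log_add_sub_log_le_div {a d : ℝ} (ha : 0 < a) (hd : 0 ≤ d) :
    log (a + d) - log a ≤ d / a := by
  have h := log_le_sub_one_of_pos (x := (a + d) / a) (by positivity)
  rw [log_div (by positivity) ha.ne'] at h
  calc _ ≤ (a + d) / a - 1 := h
    _ = d / a := by field_simp; ring

lemma one_div_sub_one_div_add {a b : ℝ} (ha : 0 < a) (hab : 0 < a + b) :
    1 / a - 1 / (a + b) = b / (a * (a + b)) := by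
  field_simp
  ring

lemma hasSum_sub_succ_of_antitone {f : ℕ → ℝ} (hf : Antitone f)
    (hlim : Tendsto f atTop (𝓝 0)) : HasSum (fun n ↦ f n - f (n + 1)) (f 0) := by
  refine (hasSum_iff_tendsto_nat_of_nonneg (fun n ↦ sub_nonneg.2 (hf n.le_succ)) _).2 ?_
  simp_rw [sum_range_sub']
  simpa using tendsto_const_nhds.sub hlim

lemma hasSum_inv_sub_inv {v β : ℝ} (hv : 0 < v) (hβ : 0 < β) :
    HasSum (fun m : ℕ ↦ 1 / (v + β * m) - 1 / (v + β * (m + 1))) (1 / v) := by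
  have hanti : Antitone fun m : ℕ ↦ 1 / (v + β * m) := fun m n hmn ↦
    one_div_le_one_div_of_le (by positivity) (by gcongr)
  have hlim : Tendsto (fun m : ℕ ↦ 1 / (v + β * m)) atTop (𝓝 0) := by
    simp_rw [one_div]
    exact tendsto_inv_atTop_zero.comp <| tendsto_atTop_add_const_left _ v <|
      tendsto_natCast_atTop_atTop.const_mul_atTop hβ
  simpa using hasSum_sub_succ_of_antitone hanti hlim

lemma hasSum_inv_sub_inv_add_one {y : ℝ} (hy : 0 < y) :
    HasSum (fun k : ℕ ↦ 1 / (y + k) - 1 / (y + k + 1)) (1 / y) := by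
  simpa [add_assoc] using hasSum_inv_sub_inv hy one_pos

lemma summable_one_div_add_mul_sq {a β : ℝ} (ha : 0 < a) (hβ : 0 < β) :
    Summable fun m : ℕ ↦ 1 / (a + β * m) ^ 2 := by
  refine (((Real.summable_one_div_nat_add_rpow (a / β) 2).2 one_lt_two).mul_left (1 / β ^ 2)).congr
    fun m ↦ ?_
  rw [abs_of_pos (by positivity), Real.rpow_two]
  field_simp
  ring

lemma summable_one_div_add_sq {a : ℝ} (ha : 0 < a) : Summable fun m : ℕ ↦ 1 / (a + m) ^ 2 := by
  simpa using summable_one_div_add_mul_sq ha one_pos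

lemma summable_one_div_succ_mul_sq {c : ℝ} (hc : 0 < c) :
    Summable fun n : ℕ ↦ 1 / ((n + 1) * c) ^ 2 :=
  (summable_one_div_add_mul_sq hc hc).congr fun n ↦ by ring_nf

lemma tsum_one_div_add_sq_bounds {v β : ℝ} (hv : 0 < v) (hβ : 0 < β) :
    1 / (β * (v + β)) ≤ ∑' m : ℕ, 1 / (v + β * (m + 1)) ^ 2 ∧
      ∑' m : ℕ, 1 / (v + β * (m + 1)) ^ 2 ≤ 1 / (β * v) := by
  have hstep {a : ℝ} (ha : 0 < a) :
      1 / (a + β) ^ 2 ≤ (1 / a - 1 / (a + β)) / β ∧ (1 / a - 1 / (a + β)) / β ≤ 1 / a ^ 2 := by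
    have e : β / (a * (a + β)) / β = 1 / (a * (a + β)) := by field_simp
    rw [one_div_sub_one_div_add ha (by positivity), e]
    constructor
    · exact one_div_le_one_div_of_le (by positivity) (by nlinarith)
    · exact one_div_le_one_div_of_le (by positivity) (by nlinarith)
  have hsum : HasSum (fun m : ℕ ↦ 1 / (v + β * (m + 1)) ^ 2)
      (∑' m : ℕ, 1 / (v + β * (m + 1)) ^ 2) :=
    ((summable_one_div_add_mul_sq (by positivity : 0 < v + β) hβ).congr fun m ↦ by ring_nf).hasSum
  constructor
  · refine (hasSum_le (fun m ↦ ?_) ((hasSum_inv_sub_inv (by positivity : 0 < v + β) hβ).div_const β)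
      hsum).trans_eq' (by field_simp)
    rw [show v + β + β * ((m : ℝ) + 1) = v + β + β * m + β by ring,
      show v + β * ((m : ℝ) + 1) = v + β + β * m by ring]
    exact (hstep (by positivity)).2
  · refine (hasSum_le (fun m ↦ ?_) hsum ((hasSum_inv_sub_inv hv hβ).div_const β)).trans_eq
      (by field_simp)
    rw [show v + β * ((m : ℝ) + 1) = v + β * m + β by ring]
    exact (hstep (by positivity)).1

lemma hasDerivAt_log_Gamma {t : ℝ} (ht : 0 < t) :
    HasDerivAt (fun s ↦ log (Gamma s)) (psi t) t :=
  (differentiableAt_Gamma fun m ↦ by linarith [(m.cast_nonneg : (0 : ℝ) ≤ m)]).hasDerivAt.log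
    (Gamma_pos_of_pos ht).ne'

lemma psi_add_one {t : ℝ} (ht : 0 < t) : psi (t + 1) = psi t + 1 / t := by
  have hrec : (fun s ↦ log (Gamma (s + 1))) =ᶠ[𝓝 t] fun s ↦ log (Gamma s) + log s := by
    filter_upwards [eventually_gt_nhds ht] with s hs
    rw [Gamma_add_one hs.ne', log_mul hs.ne' (Gamma_pos_of_pos hs).ne', add_comm]
  have h₁ := (hasDerivAt_log_Gamma (by linarith : 0 < t + 1)).comp_add_const t 1
  have h₂ := (hasDerivAt_log_Gamma ht).add (hasDerivAt_log ht.ne')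
  rw [one_div]
  exact h₁.unique (h₂.congr_of_eventuallyEq hrec)

lemma psi_le_log {t : ℝ} (ht : 0 < t) : psi t ≤ log t := by
  have h := convexOn_log_Gamma.le_slope_of_hasDerivAt (x := t) (y := t + 1) ht
    (Set.mem_Ioi.2 (by linarith)) (by linarith) (hasDerivAt_log_Gamma ht)
  rwa [slope_def_field, add_sub_cancel_left, div_one, Function.comp_apply, Function.comp_apply,
    Gamma_add_one ht.ne', log_mul ht.ne' (Gamma_pos_of_pos ht).ne', add_sub_cancel_right] at h

lemma log_le_psi_add_one {t : ℝ} (ht : 0 < t) : log t ≤ psi (t + 1) := by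
  have h := convexOn_log_Gamma.slope_le_of_hasDerivAt (x := t) (y := t + 1) ht
    (Set.mem_Ioi.2 (by linarith)) (by linarith) (hasDerivAt_log_Gamma (by linarith))
  rwa [slope_def_field, add_sub_cancel_left, div_one, Function.comp_apply, Function.comp_apply,
    Gamma_add_one ht.ne', log_mul ht.ne' (Gamma_pos_of_pos ht).ne', add_sub_cancel_right] at h

def psiSubLog (y : ℝ) : ℝ := psi y - log y

def invSubLogStep (u : ℝ) : ℝ := 1 / u - (log (u + 1) - log u)

def psiSubLogDeriv (y : ℝ) : ℝ := ∑' k : ℕ, 1 / ((y + k) ^ 2 * (y + k + 1))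

lemma abs_psiSubLog_add_one_le {t : ℝ} (ht : 0 < t) : |psiSubLog (t + 1)| ≤ 1 / t := by
  have hlog := log_add_sub_log_le_div ht zero_le_one
  rw [abs_le, psiSubLog]
  constructor <;> linarith [log_le_psi_add_one ht, psi_le_log (by linarith : 0 < t + 1)]

lemma tendsto_psiSubLog_add_nat {y : ℝ} (hy : 0 < y) :
    Tendsto (fun n : ℕ ↦ psiSubLog (y + n)) atTop (𝓝 0) := by
  have hlim : Tendsto (fun n : ℕ ↦ 1 / (y + n)) atTop (𝓝 0) :=
    tendsto_const_nhds.div_atTop (tendsto_atTop_add_const_left _ y tendsto_natCast_atTop_atTop)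
  refine (tendsto_add_atTop_iff_nat 1).1 <| squeeze_zero_norm (fun n ↦ ?_) hlim
  rw [Real.norm_eq_abs, Nat.cast_succ, ← add_assoc]
  exact abs_psiSubLog_add_one_le (by positivity)

lemma psiSubLog_add_one_sub {u : ℝ} (hu : 0 < u) :
    psiSubLog (u + 1) - psiSubLog u = invSubLogStep u := by
  rw [psiSubLog, psiSubLog, invSubLogStep, psi_add_one hu]
  ring

lemma invSubLogStep_nonneg {u : ℝ} (hu : 0 < u) : 0 ≤ invSubLogStep u := by
  have := log_add_sub_log_le_div hu zero_le_one
  rw [invSubLogStep]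
  linarith

lemma invSubLogStep_le {u : ℝ} (hu : 0 < u) : invSubLogStep u ≤ 1 / u - 1 / (u + 1) := by
  have := div_add_le_log_add_sub_log hu zero_le_one
  rw [invSubLogStep]
  linarith

lemma hasSum_invSubLogStep {y : ℝ} (hy : 0 < y) :
    HasSum (fun k : ℕ ↦ invSubLogStep (y + k)) (-psiSubLog y) := by
  have hstep (k : ℕ) : psiSubLog (y + ↑(k + 1)) - psiSubLog (y + k) = invSubLogStep (y + k) := by
    rw [Nat.cast_succ, ← add_assoc, psiSubLog_add_one_sub (by positivity)]
  have hanti : Antitone fun k : ℕ ↦ -psiSubLog (y + k) := antitone_nat_of_succ_le fun k ↦ by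
    linarith [hstep k, invSubLogStep_nonneg (by positivity : 0 < y + k)]
  have h := hasSum_sub_succ_of_antitone hanti (by simpa using (tendsto_psiSubLog_add_nat hy).neg)
  simp only [Nat.cast_zero, add_zero, neg_sub_neg] at h
  simpa only [hstep] using h

lemma abs_psiSubLog_le {y : ℝ} (hy : 0 < y) : |psiSubLog y| ≤ 1 / y := by
  have hsum := hasSum_invSubLogStep hy
  have hle := hasSum_le (fun k ↦ ?_) hsum (hasSum_inv_sub_inv_add_one hy)
  · have := hsum.nonneg fun k : ℕ ↦ invSubLogStep_nonneg (by positivity : 0 < y + k)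
    rw [abs_le]
    constructor <;> linarith
  · simpa [add_assoc] using invSubLogStep_le (by positivity : 0 < y + k)

lemma hasDerivAt_invSubLogStep {u : ℝ} (hu : 0 < u) :
    HasDerivAt invSubLogStep (-(1 / (u ^ 2 * (u + 1)))) u := by
  have h := (hasDerivAt_inv hu.ne').fun_sub
    ((((hasDerivAt_id' u).add_const 1).log (by positivity)).fun_sub (hasDerivAt_log hu.ne'))
  have hfun : invSubLogStep = fun v ↦ v⁻¹ - (log (v + 1) - log v) := by
    funext v; simp only [invSubLogStep, one_div]
  rw [hfun]
  refine h.congr_deriv ?_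
  field_simp
  ring

lemma hasDerivAt_psiSubLog {y : ℝ} (hy : 0 < y) : HasDerivAt psiSubLog (psiSubLogDeriv y) y := by
  have hy2 : 0 < y / 2 := by positivity
  have hyI : y ∈ Set.Ioi (y / 2) := Set.mem_Ioi.2 (half_lt_self hy)
  have hderiv (k : ℕ) (t : ℝ) (ht : t ∈ Set.Ioi (y / 2)) :
      HasDerivAt (fun s ↦ -invSubLogStep (s + k)) (1 / ((t + k) ^ 2 * (t + k + 1))) t := by
    have hpos : 0 < t + k := by have : 0 < t := hy2.trans ht; positivity
    simpa using ((hasDerivAt_invSubLogStep hpos).comp_add_const t k).fun_neg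
  have hbound (k : ℕ) (t : ℝ) (ht : t ∈ Set.Ioi (y / 2)) :
      ‖1 / ((t + k) ^ 2 * (t + k + 1))‖ ≤ 1 / (y / 2 + k) ^ 2 := by
    have ht' : y / 2 < t := ht
    rw [Real.norm_of_nonneg (by have : 0 < t := hy2.trans ht; positivity)]
    gcongr
    nlinarith
  have hsum := hasDerivAt_tsum_of_isPreconnected (summable_one_div_add_sq hy2) isOpen_Ioi
    isPreconnected_Ioi hderiv hbound hyI (hasSum_invSubLogStep hy).neg.summable hyI
  refine hsum.congr_of_eventuallyEq ?_
  filter_upwards [eventually_gt_nhds (half_lt_self hy)] with t ht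
  rw [tsum_neg, (hasSum_invSubLogStep (hy2.trans ht)).tsum_eq, neg_neg]

lemma one_div_sq_mul_add_one_le {y v : ℝ} (hy : 0 < y) (hyv : y ≤ v) :
    1 / (v ^ 2 * (v + 1)) ≤ 1 / y * (1 / v - 1 / (v + 1)) := by
  have hv : 0 < v := hy.trans_le hyv
  rw [one_div_sub_one_div_add hv (by positivity), one_div_mul_one_div]
  exact one_div_le_one_div_of_le (by positivity) (by nlinarith)

lemma psiSubLogDeriv_nonneg {y : ℝ} (hy : 0 < y) : 0 ≤ psiSubLogDeriv y :=
  tsum_nonneg fun k ↦ by positivity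

lemma psiSubLogDeriv_le {y : ℝ} (hy : 0 < y) : psiSubLogDeriv y ≤ 1 / y ^ 2 := by
  have hsum := (hasSum_inv_sub_inv_add_one hy).mul_left (1 / y)
  have hle (k : ℕ) := one_div_sq_mul_add_one_le hy (le_add_of_nonneg_right k.cast_nonneg)
  calc psiSubLogDeriv y ≤ 1 / y * (1 / y) :=
        (Summable.of_nonneg_of_le (fun k ↦ by positivity) hle hsum.summable).tsum_le_tsum
          hle hsum.summable |>.trans_eq hsum.tsum_eq
    _ = 1 / y ^ 2 := by ring

lemma psiSubLogDeriv_eq {y : ℝ} (hy : 0 < y) :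
    psiSubLogDeriv y = ∑' m : ℕ, 1 / (y + m) ^ 2 - 1 / y := by
  have hterm (k : ℕ) : 1 / ((y + k) ^ 2 * (y + k + 1)) =
      1 / (y + k) ^ 2 - (1 / (y + k) - 1 / (y + k + 1)) := by
    field_simp
    ring
  rw [psiSubLogDeriv, tsum_congr hterm, (summable_one_div_add_sq hy).tsum_sub
    (hasSum_inv_sub_inv_add_one hy).summable, (hasSum_inv_sub_inv_add_one hy).tsum_eq]

def herglotzDeriv (x : ℝ) : ℝ := ∑' n : ℕ, psiSubLogDeriv ((n + 1) * x)

lemma HerglotzF_eq_tsum (x : ℝ) :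
    HerglotzF x = ∑' n : ℕ, psiSubLog ((n + 1) * x) / (n + 1) := by
  rw [HerglotzF, tsum_pnat_eq_tsum_succ (f := fun n : ℕ ↦ (psi (n * x) - log (n * x)) / n)]
  simp only [Nat.cast_succ, psiSubLog]

lemma summable_psiSubLogDeriv_succ_mul {x : ℝ} (hx : 0 < x) :
    Summable fun n : ℕ ↦ psiSubLogDeriv ((n + 1) * x) :=
  .of_nonneg_of_le (fun n ↦ psiSubLogDeriv_nonneg (by positivity))
    (fun n ↦ psiSubLogDeriv_le (by positivity)) (summable_one_div_succ_mul_sq hx)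

lemma hasDerivAt_HerglotzF {x : ℝ} (hx : 0 < x) : HasDerivAt HerglotzF (herglotzDeriv x) x := by
  have hx2 : 0 < x / 2 := by positivity
  have hxI : x ∈ Set.Ioi (x / 2) := Set.mem_Ioi.2 (half_lt_self hx)
  have hderiv (n : ℕ) (t : ℝ) (ht : t ∈ Set.Ioi (x / 2)) :
      HasDerivAt (fun s ↦ psiSubLog ((n + 1) * s) / (n + 1)) (psiSubLogDeriv ((n + 1) * t)) t := by
    have hpos : 0 < (n + 1) * t := by have : 0 < t := hx2.trans ht; positivity
    have h := ((hasDerivAt_psiSubLog hpos).comp t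
      ((hasDerivAt_id t).const_mul (n + 1 : ℝ))).div_const (n + 1 : ℝ)
    refine h.congr_deriv ?_
    field_simp
  have hbound (n : ℕ) (t : ℝ) (ht : t ∈ Set.Ioi (x / 2)) :
      ‖psiSubLogDeriv ((n + 1) * t)‖ ≤ 1 / ((n + 1) * (x / 2)) ^ 2 := by
    have ht' : x / 2 < t := ht
    have hpos : 0 < (n + 1) * t := by have : 0 < t := hx2.trans ht; positivity
    rw [Real.norm_of_nonneg (psiSubLogDeriv_nonneg hpos)]
    refine (psiSubLogDeriv_le hpos).trans ?_
    gcongr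
  have hsummable : Summable fun n : ℕ ↦ psiSubLog ((n + 1) * x) / (n + 1) := by
    refine .of_norm_bounded ((summable_one_div_succ_mul_sq hx).mul_left x) fun n ↦ ?_
    have hpos : 0 < (n + 1) * x := by positivity
    rw [Real.norm_eq_abs, abs_div, abs_of_pos (by positivity : (0 : ℝ) < n + 1)]
    calc |psiSubLog ((n + 1) * x)| / (n + 1) ≤ 1 / ((n + 1) * x) / (n + 1) := by
          gcongr; exact abs_psiSubLog_le hpos
      _ = x * (1 / ((n + 1) * x) ^ 2) := by field_simp
  have h := hasDerivAt_tsum_of_isPreconnected (summable_one_div_succ_mul_sq hx2) isOpen_Ioi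
    isPreconnected_Ioi hderiv hbound hxI hsummable hxI
  rw [show HerglotzF = _ from funext HerglotzF_eq_tsum]
  exact h

section RiemannSum

variable {α β : ℝ}

lemma log_sub_log_div_eq_sum_range (c : ℝ) (N : ℕ) :
    (log (α * N + c) - log c) / α =
      ∑ n ∈ range N, (log (α * (n + 1) + c) - log (α * n + c)) / α := by
  have h := sum_range_sub (fun n : ℕ ↦ log (α * n + c)) N
  push_cast at h
  rw [← sum_div, h, mul_zero, zero_add]

lemma sum_one_div_le_log_sub_log_div (hα : 0 < α) {c : ℝ} (hc : 0 < c) (N : ℕ) :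
    ∑ n ∈ range N, 1 / (α * (n + 1) + c) ≤ (log (α * N + c) - log c) / α := by
  rw [log_sub_log_div_eq_sum_range]
  refine sum_le_sum fun n _ ↦ ?_
  have h := div_add_le_log_add_sub_log (by positivity : 0 < α * n + c) hα.le
  rw [le_div_iff₀ hα]
  calc 1 / (α * (n + 1) + c) * α = α / (α * n + c + α) := by ring_nf
    _ ≤ _ := h.trans_eq (by ring_nf)

lemma log_sub_log_div_le_sum_one_div_add (hα : 0 < α) {c : ℝ} (hc : 0 < c) (N : ℕ) :
    (log (α * N + c) - log c) / α ≤ ∑ n ∈ range N, 1 / (α * (n + 1) + c) + 1 / c := by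
  have htel : ∑ n ∈ range N, (1 / (α * n + c) - 1 / (α * (n + 1) + c)) =
      1 / c - 1 / (α * N + c) := by
    simpa using sum_range_sub' (fun n : ℕ ↦ 1 / (α * n + c)) N
  have hle : (log (α * N + c) - log c) / α ≤ ∑ n ∈ range N, 1 / (α * n + c) := by
    rw [log_sub_log_div_eq_sum_range]
    refine sum_le_sum fun n _ ↦ ?_
    have h := log_add_sub_log_le_div (by positivity : 0 < α * n + c) hα.le
    rw [div_le_iff₀ hα]
    calc _ = log (α * n + c + α) - log (α * n + c) := by ring_nf
      _ ≤ α / (α * n + c) := h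
      _ = _ := by field_simp
  have : 0 ≤ 1 / (α * N + c) := by positivity
  rw [sum_sub_distrib] at htel
  linarith

lemma tendsto_sum_one_div_add (hα : 0 < α) (hβ : 0 < β) {δ : ℝ} (hδ : 0 ≤ δ) :
    Tendsto (fun N : ℕ ↦ ∑ n ∈ range N, 1 / (α * (n + 1) + (β * N + δ))) atTop
      (𝓝 (log ((α + β) / β) / α)) := by
  have hδN := tendsto_const_div_atTop_nhds_zero_nat δ
  have hratio : Tendsto (fun N : ℕ ↦ (α + β + δ / N) / (β + δ / N)) atTop (𝓝 ((α + β) / β)) := by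
    have h := (tendsto_const_nhds (x := α + β)).add hδN
    have h' := (tendsto_const_nhds (x := β)).add hδN
    rw [add_zero] at h h'
    exact h.div h' hβ.ne'
  have hlog : Tendsto (fun N : ℕ ↦ (log (α * N + (β * N + δ)) - log (β * N + δ)) / α) atTop
      (𝓝 (log ((α + β) / β) / α)) := by
    refine (((continuousAt_log (by positivity)).tendsto.comp hratio).div_const α).congr' ?_
    filter_upwards [eventually_gt_atTop 0] with N hN
    have hN : (0 : ℝ) < N := by exact_mod_cast hN
    rw [Function.comp_apply, ← log_div (by positivity) (by positivity)]
    congr 2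
    field_simp
    ring
  have hinv : Tendsto (fun N : ℕ ↦ 1 / (β * N + δ)) atTop (𝓝 0) :=
    tendsto_const_nhds.div_atTop
      (tendsto_atTop_add_const_right _ δ (tendsto_natCast_atTop_atTop.const_mul_atTop hβ))
  have hc : ∀ᶠ N : ℕ in atTop, 0 < β * N + δ := by
    filter_upwards [eventually_gt_atTop 0] with N hN
    have hN : (0 : ℝ) < N := by exact_mod_cast hN
    positivity
  refine tendsto_of_tendsto_of_tendsto_of_le_of_le' (by simpa only [sub_zero] using hlog.sub hinv)
    hlog ?_ ?_
  · filter_upwards [hc] with N hc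
    linarith [log_sub_log_div_le_sum_one_div_add hα hc N]
  · filter_upwards [hc] with N hc
    exact sum_one_div_le_log_sub_log_div hα hc N

end RiemannSum

lemma tendsto_sum_tsum_tail {α β : ℝ} (hα : 0 < α) (hβ : 0 < β) :
    Tendsto (fun N : ℕ ↦ ∑ n ∈ range N, ∑' m : ℕ, 1 / (α * (n + 1) + β * (m + N + 1)) ^ 2) atTop
      (𝓝 (log ((α + β) / β) / (α * β))) := by
  have htail (N n : ℕ) : ∑' m : ℕ, 1 / (α * (n + 1) + β * (m + N + 1)) ^ 2 =
      ∑' m : ℕ, 1 / (α * (n + 1) + β * N + β * (m + 1)) ^ 2 :=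
    tsum_congr fun m ↦ by ring_nf
  rw [← div_div]
  refine tendsto_of_tendsto_of_tendsto_of_le_of_le
    ((tendsto_sum_one_div_add hα hβ hβ.le).div_const β)
    ((tendsto_sum_one_div_add hα hβ le_rfl).div_const β) (fun N ↦ ?_) (fun N ↦ ?_)
  · simp only [sum_div, htail]
    exact sum_le_sum fun n _ ↦
      (tsum_one_div_add_sq_bounds (by positivity) hβ).1.trans_eq' (by field_simp; ring)
  · simp only [sum_div, htail]
    exact sum_le_sum fun n _ ↦
      (tsum_one_div_add_sq_bounds (by positivity) hβ).2.trans_eq (by field_simp; ring)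

lemma sum_tsum_one_div_sq_split {α β : ℝ} (hα : 0 < α) (hβ : 0 < β) (N : ℕ) :
    ∑ n ∈ range N, ∑' m : ℕ, 1 / (α * (n + 1) + β * m) ^ 2 =
      ∑ n ∈ range N, 1 / (α * (n + 1)) ^ 2 +
        ∑ n ∈ range N, ∑ m ∈ range N, 1 / (α * (n + 1) + β * (m + 1)) ^ 2 +
        ∑ n ∈ range N, ∑' m : ℕ, 1 / (α * (n + 1) + β * (m + N + 1)) ^ 2 := by
  rw [← sum_add_distrib, ← sum_add_distrib]
  refine sum_congr rfl fun n _ ↦ ?_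
  rw [← (summable_one_div_add_mul_sq (by positivity : 0 < α * (n + 1)) hβ).sum_add_tsum_nat_add
    (N + 1), sum_range_succ']
  simp only [Nat.cast_add, Nat.cast_one, Nat.cast_zero, mul_zero, add_zero, ← add_assoc]
  ring

lemma tendsto_sum_one_div_mul_succ_sq (α : ℝ) :
    Tendsto (fun N : ℕ ↦ ∑ n ∈ range N, 1 / (α * (n + 1)) ^ 2) atTop (𝓝 (π ^ 2 / 6 / α ^ 2)) := by
  have hbasel : HasSum (fun n : ℕ ↦ 1 / ((n : ℝ) + 1) ^ 2) (π ^ 2 / 6) := by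
    simpa using (hasSum_nat_add_iff' 1).2 hasSum_zeta_two
  refine (hbasel.div_const (α ^ 2)).tendsto_sum_nat.congr fun N ↦ sum_congr rfl fun n _ ↦ ?_
  rw [mul_pow, div_div, mul_comm]

lemma psiSubLogDeriv_mul_sub {x y : ℝ} (hx : 0 < x) (hy : 0 < y) :
    psiSubLogDeriv (y * x) - psiSubLogDeriv (y * (1 / x)) / x ^ 2 =
      ∑' m : ℕ, 1 / (x * y + m) ^ 2 - ∑' m : ℕ, 1 / (y + x * m) ^ 2 := by
  have hscale : ∑' m : ℕ, 1 / (y * (1 / x) + m) ^ 2 / x ^ 2 = ∑' m : ℕ, 1 / (y + x * m) ^ 2 :=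
    tsum_congr fun m ↦ by field_simp
  rw [psiSubLogDeriv_eq (by positivity), psiSubLogDeriv_eq (by positivity), sub_div,
    tsum_div_const.symm, hscale, mul_comm y x]
  field_simp
  ring

lemma sum_range_psiSubLogDeriv_sub_eq {x : ℝ} (hx : 0 < x) (N : ℕ) :
    ∑ n ∈ range N, (psiSubLogDeriv ((n + 1) * x) - psiSubLogDeriv ((n + 1) * (1 / x)) / x ^ 2) =
      (∑ n ∈ range N, 1 / (x * (n + 1)) ^ 2 - ∑ n ∈ range N, 1 / ((n : ℝ) + 1) ^ 2) +
      (∑ n ∈ range N, ∑' m : ℕ, 1 / (x * (n + 1) + (m + N + 1)) ^ 2 -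
        ∑ n ∈ range N, ∑' m : ℕ, 1 / (n + 1 + x * (m + N + 1)) ^ 2) := by
  have hsym : ∑ n ∈ range N, ∑ m ∈ range N, 1 / (x * (n + 1) + (m + 1)) ^ 2 =
      ∑ n ∈ range N, ∑ m ∈ range N, 1 / (n + 1 + x * (m + 1)) ^ 2 := by
    rw [sum_comm]
    exact sum_congr rfl fun n _ ↦ sum_congr rfl fun m _ ↦ by ring_nf
  have h₁ := sum_tsum_one_div_sq_split hx one_pos N
  have h₂ := sum_tsum_one_div_sq_split one_pos hx N
  simp only [one_mul] at h₁ h₂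
  rw [sum_congr rfl fun n _ ↦ psiSubLogDeriv_mul_sub hx n.cast_add_one_pos, sum_sub_distrib, h₁,
    h₂, hsym]
  ring

lemma herglotzDeriv_sub_div_sq {x : ℝ} (hx : 0 < x) :
    herglotzDeriv x - herglotzDeriv (1 / x) / x ^ 2 = log x / x + π ^ 2 / 6 * (1 / x ^ 2 - 1) := by
  have hsum := (summable_psiSubLogDeriv_succ_mul hx).hasSum.sub
    ((summable_psiSubLogDeriv_succ_mul (by positivity : 0 < 1 / x)).hasSum.div_const (x ^ 2))
  have hlim := ((tendsto_sum_one_div_mul_succ_sq x).sub (tendsto_sum_one_div_mul_succ_sq 1)).add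
    ((tendsto_sum_tsum_tail hx one_pos).sub (tendsto_sum_tsum_tail one_pos hx))
  simp only [one_mul] at hlim
  rw [herglotzDeriv, herglotzDeriv, tendsto_nhds_unique hsum.tendsto_sum_nat
    (hlim.congr fun N ↦ (sum_range_psiSubLogDeriv_sub_eq hx N).symm), add_comm 1 x,
    log_div (by positivity) hx.ne', div_one]
  field_simp
  ring

def zagierDefect (t : ℝ) : ℝ :=
  HerglotzF t + HerglotzF (1 / t) - (log t ^ 2 / 2 - π ^ 2 / 6 * (t - 2 + 1 / t))

lemma hasDerivAt_zagierDefect {t : ℝ} (ht : 0 < t) : HasDerivAt zagierDefect 0 t := by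
  have hinv : HasDerivAt (fun s : ℝ ↦ 1 / s) (-(1 / t ^ 2)) t := by
    simpa only [one_div] using hasDerivAt_inv ht.ne'
  have hF := (hasDerivAt_HerglotzF ht).fun_add
    ((hasDerivAt_HerglotzF (one_div_pos.2 ht)).comp t hinv)
  have hlog := (((hasDerivAt_log ht.ne').fun_pow 2).div_const 2).fun_sub
    ((((hasDerivAt_id' t).sub_const 2).fun_add hinv).const_mul (π ^ 2 / 6))
  refine (hF.fun_sub hlog).congr_deriv ?_
  have hkey := herglotzDeriv_sub_div_sq ht
  norm_num only [Nat.cast_ofNat, pow_one]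
  field_simp at hkey ⊢
  linear_combination hkey

end

end Herglotz

theorem stmt19 (x : ℝ) (hx : 0 < x) :
    HerglotzF x + HerglotzF (1 / x) =
      2 * HerglotzF 1 + (1 / 2) * (Real.log x) ^ 2 - (Real.pi ^ 2 / (6 * x)) * (x - 1) ^ 2 := by
  have hconst : Herglotz.zagierDefect x = Herglotz.zagierDefect 1 :=
    isOpen_Ioi.is_const_of_deriv_eq_zero isPreconnected_Ioi
      (fun t ht ↦ (Herglotz.hasDerivAt_zagierDefect ht).differentiableAt.differentiableWithinAt)
      (fun t ht ↦ (Herglotz.hasDerivAt_zagierDefect ht).deriv) hx (Set.mem_Ioi.2 one_pos)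
  simp only [Herglotz.zagierDefect, div_one, log_one] at hconst
  field_simp at hconst ⊢
  linear_combination hconst
end
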